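/- arXiv:math/0602668 — 14 statements merged into one kernel-verified Lean document; each statement's English description precedes it below -/
import Mathlib

section
/- Let p be a prime and n a positive integer coprime to p. There exists α in the algebraic closure of 𝔽_p such that (α+λ)^n = 1 for all λ ∈ 𝔽_p if and only if there exists a nonzero element c in the algebraic closure of 𝔽_p such that the polynomial x^p - x - c divides x^n - 1. -/
open Polynomial

/-!
Shifting the factorisation `X ^ p - X = ∏ a : 𝔽_p, (X - a)` by `α` gives
`X ^ p - X - (α ^ p - α) = ∏ λ : 𝔽_p, (X - (α + λ))`, whose roots are distinct. So the elements
`α + λ` are all `n`-th roots of unity exactly when this polynomial divides `X ^ n - 1`, and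
`α ^ p - α = 0` exactly when `α ∈ 𝔽_p`, in which case some `α + λ` vanishes. Conversely every
`X ^ p - X - c` has a root `α` in the algebraic closure, and then `c = α ^ p - α`.
-/

theorem FiniteField.X_pow_card_sub_X_eq_prod_X_sub_C (K : Type*) [Field K] [Fintype K] :
    (X ^ Fintype.card K - X : K[X]) = ∏ a : K, (X - C a) := by
  have hq : 1 < Fintype.card K := Fintype.one_lt_card
  have hmonic : (X ^ Fintype.card K - X : K[X]).Monic := monic_X_pow_sub (by simpa using hq)
  have hroots := FiniteField.roots_X_pow_card_sub_X K
  rw [← prod_multiset_X_sub_C_of_monic_of_roots_card_eq hmonic, hroots]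
  · rfl
  · rw [hroots, FiniteField.X_pow_card_sub_X_natDegree_eq K hq]
    rfl

section ArtinSchreier

variable {p : ℕ} [Fact p.Prime] {L : Type*} [Field L] [Algebra (ZMod p) L]

theorem X_pow_sub_X_sub_C_pow_sub_self_eq_prod (α : L) :
    (X ^ p - X - C (α ^ p - α) : L[X]) =
      ∏ a : ZMod p, (X - C (α + algebraMap (ZMod p) L a)) := by
  have : CharP L p := charP_of_injective_algebraMap' (ZMod p) p
  have h := congrArg (fun f => (f.map (algebraMap (ZMod p) L)).comp (X - C α))
    (FiniteField.X_pow_card_sub_X_eq_prod_X_sub_C (ZMod p))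
  simp only [ZMod.card, Polynomial.map_prod, Polynomial.map_sub, Polynomial.map_pow, map_X, map_C,
    prod_comp, sub_comp, pow_comp, X_comp, C_comp, sub_pow_char] at h
  calc (X ^ p - X - C (α ^ p - α) : L[X]) = X ^ p - C α ^ p - (X - C α) := by
        rw [C_sub, C_pow]; ring
    _ = _ := h
    _ = _ := Finset.prod_congr rfl fun a _ => by rw [C_add]; ring

theorem pow_sub_self_eq_zero_iff_mem_range_algebraMap (α : L) :
    α ^ p - α = 0 ↔ α ∈ Set.range (algebraMap (ZMod p) L) := by
  have h := congrArg (eval α) (X_pow_sub_X_sub_C_pow_sub_self_eq_prod (p := p) (0 : L))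
  simp only [eval_sub, eval_pow, eval_X, eval_C, eval_prod, zero_pow (Fact.out : p.Prime).ne_zero,
    sub_zero, zero_add] at h
  rw [h, Finset.prod_eq_zero_iff]
  simp only [Finset.mem_univ, true_and, sub_eq_zero, Set.mem_range]
  exact exists_congr fun a => eq_comm

end ArtinSchreier

theorem natDegree_X_pow_sub_X_sub_C {K : Type*} [Field K] {p : ℕ} (hp : 1 < p) (c : K) :
    (X ^ p - X - C c : K[X]).natDegree = p := by
  rw [natDegree_sub_C, FiniteField.X_pow_card_sub_X_natDegree_eq K hp]

theorem Polynomial.prod_X_sub_C_dvd_iff_forall_isRoot {R ι : Type*} [Field R] [Fintype ι]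
    {f : ι → R} (hf : Function.Injective f) (q : R[X]) :
    ∏ i, (X - C (f i)) ∣ q ↔ ∀ i, q.IsRoot (f i) := by
  refine ⟨fun h i => ?_, fun h => ?_⟩
  · have hi : X - C (f i) ∣ ∏ j, (X - C (f j)) := Finset.dvd_prod_of_mem _ (Finset.mem_univ i)
    exact dvd_iff_isRoot.mp (hi.trans h)
  · exact Fintype.prod_dvd_of_coprime (pairwise_coprime_X_sub_C hf) fun i =>
      dvd_iff_isRoot.mpr (h i)

theorem stmt_0_general (p : ℕ) [Fact p.Prime] (n : ℕ) (hn : 0 < n) :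
    (∃ α : AlgebraicClosure (ZMod p),
        ∀ lam : ZMod p, (α + algebraMap (ZMod p) (AlgebraicClosure (ZMod p)) lam) ^ n = 1) ↔
      ∃ c : AlgebraicClosure (ZMod p), c ≠ 0 ∧
        (X ^ p - X - C c : Polynomial (AlgebraicClosure (ZMod p))) ∣ X ^ n - 1 := by
  have hp : p.Prime := Fact.out
  have hshift (α : AlgebraicClosure (ZMod p)) :
      Function.Injective fun a : ZMod p => α + algebraMap (ZMod p) _ a :=
    (add_right_injective α).comp (algebraMap (ZMod p) _).injective
  constructor
  · rintro ⟨α, hα⟩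
    refine ⟨α ^ p - α, fun h => ?_, ?_⟩
    · obtain ⟨a, rfl⟩ := (pow_sub_self_eq_zero_iff_mem_range_algebraMap α).mp h
      simpa [← map_add, hn.ne'] using hα (-a)
    · rw [X_pow_sub_X_sub_C_pow_sub_self_eq_prod, prod_X_sub_C_dvd_iff_forall_isRoot (hshift α)]
      simpa [sub_eq_zero] using hα
  · rintro ⟨c, -, hdvd⟩
    obtain ⟨α, hα⟩ := IsAlgClosed.exists_root (X ^ p - X - C c)
      (degree_ne_of_natDegree_ne <| by rw [natDegree_X_pow_sub_X_sub_C hp.one_lt]; exact hp.ne_zero)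
    obtain rfl : c = α ^ p - α := by
      simpa [sub_eq_zero, eq_comm] using hα
    rw [X_pow_sub_X_sub_C_pow_sub_self_eq_prod,
      prod_X_sub_C_dvd_iff_forall_isRoot (hshift α)] at hdvd
    exact ⟨α, fun a => by simpa [sub_eq_zero] using hdvd a⟩

theorem stmt_0 (p : ℕ) [Fact p.Prime] (n : ℕ) (hn : 0 < n) (hcop : Nat.Coprime n p) :
    (∃ α : AlgebraicClosure (ZMod p),
        ∀ lam : ZMod p, (α + algebraMap (ZMod p) (AlgebraicClosure (ZMod p)) lam) ^ n = 1) ↔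
      ∃ c : AlgebraicClosure (ZMod p), c ≠ 0 ∧
        (X ^ p - X - C c : Polynomial (AlgebraicClosure (ZMod p))) ∣ X ^ n - 1 :=
  stmt_0_general p n hn
end

section
/- Let q = 2^s for s ≥ 1. In 𝔽_2[x], the polynomial x^{q+1} + x + 1 divides x^{q^2+q+1} - 1, i.e., x^{q^2+q+1} ≡ 1 modulo x^{q+1} + x + 1. -/
/-! Work in `𝔽₂[x]/(f)` with `f = x^{q+1} + x + 1`, where the class `x` satisfies `x^{q+1} = x + 1`.
Since `x ↦ x^q` is additive in characteristic 2,
`x^{q²+q+1} = (x^{q+1})^q · x = (x + 1)^q · x = x^{q+1} + x = 1`. -/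

open Polynomial

theorem CharTwo.pow_sq_add_add_one_eq_one {R : Type*} [CommRing R] [CharP R 2] (s : ℕ) {x : R}
    (hx : x ^ (2 ^ s + 1) = x + 1) : x ^ ((2 ^ s) ^ 2 + 2 ^ s + 1) = 1 := by
  have frobenius_x_add_one : (x + 1) ^ 2 ^ s = x ^ 2 ^ s + 1 := by
    rw [add_pow_char_pow, one_pow]
  calc x ^ ((2 ^ s) ^ 2 + 2 ^ s + 1) = (x ^ (2 ^ s + 1)) ^ 2 ^ s * x := by ring
    _ = (x + 1) ^ 2 ^ s * x := by rw [hx]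
    _ = x ^ (2 ^ s + 1) + x := by rw [frobenius_x_add_one]; ring
    _ = 1 := by rw [hx, add_right_comm, CharTwo.add_self_eq_zero, zero_add]

theorem stmt_1_general (s : ℕ) (q : ℕ) (hq : q = 2 ^ s) :
    (X ^ (q + 1) + X + 1 : Polynomial (ZMod 2)) ∣ X ^ (q ^ 2 + q + 1) - 1 := by
  subst hq
  set f : (ZMod 2)[X] := X ^ (2 ^ s + 1) + X + 1
  rw [← AdjoinRoot.mk_eq_zero (f := f)]
  rcases subsingleton_or_nontrivial (AdjoinRoot f) with _ | _
  · exact Subsingleton.elim _ _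
  have : CharP (AdjoinRoot f) 2 :=
    charP_of_injective_algebraMap (algebraMap (ZMod 2) _).injective 2
  have root_pow_succ : AdjoinRoot.root f ^ (2 ^ s + 1) = AdjoinRoot.root f + 1 := by
    have : AdjoinRoot.mk f (X ^ (2 ^ s + 1) + X + 1) = 0 := AdjoinRoot.mk_self
    simp only [map_add, map_pow, AdjoinRoot.mk_X, map_one] at this
    rwa [add_assoc, CharTwo.add_eq_zero] at this
  simp only [map_sub, map_pow, AdjoinRoot.mk_X, map_one,
    CharTwo.pow_sq_add_add_one_eq_one s root_pow_succ, sub_self]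

theorem stmt_1 (s : ℕ) (hs : 1 ≤ s) (q : ℕ) (hq : q = 2 ^ s) :
    (X ^ (q + 1) + X + 1 : Polynomial (ZMod 2)) ∣ X ^ (q ^ 2 + q + 1) - 1 :=
  stmt_1_general s q hq
end

section
/- Let q = 2^s for s ≥ 1 and let α be a root of x^{q+1} + x + 1 in the algebraic closure of 𝔽_2. Then α^{q^2+q+1} = 1 and (α+1)^{q^2+q+1} = 1. -/
theorem stmt_2 (s : ℕ) (hs : 1 ≤ s) (q : ℕ) (hq : q = 2 ^ s)
    (α : AlgebraicClosure (ZMod 2)) (hα : α ^ (q + 1) + α + 1 = 0) :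
    α ^ (q ^ 2 + q + 1) = 1 ∧ (α + 1) ^ (q ^ 2 + q + 1) = 1 := by
  have h2 : (2 : AlgebraicClosure (ZMod 2)) = 0 := by
    exact_mod_cast CharP.cast_eq_zero (AlgebraicClosure (ZMod 2)) 2
  have h1 : α ^ (q + 1) = α + 1 := by linear_combination hα - (α + 1) * h2
  have hfrob : (α + 1) ^ q = α ^ q + 1 := by
    subst hq
    rw [add_pow_char_pow, one_pow]
  have key : α ^ (q ^ 2 + q + 1) = 1 := by
    have : α ^ (q ^ 2 + q + 1) = (α ^ (q + 1)) ^ q * α := by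
      rw [← pow_mul, ← pow_succ]; ring_nf
    rw [this, h1, hfrob, add_mul, one_mul, ← pow_succ, h1]
    linear_combination α * h2
  refine ⟨key, ?_⟩
  rw [← h1, ← pow_mul, mul_comm, pow_mul, key, one_pow]
end

section
/- Let p be prime, q = p^s, and M = [[a,b],[c,d]] ∈ GL_2(𝔽_q). Let f(x) = c x^{q+1} + d x^q - a x - b ∈ 𝔽_q[x]. If the image of M in PGL_2(𝔽_q) has order u, then f(x) divides x^{q^u} - x; in particular f splits into linear factors over 𝔽_{q^u}. -/
open Polynomial Matrix

/-!
In any `F`-algebra, a root `x` of `f` satisfies `(c x + d) x ^ q = a x + b`, i.e. `M (x, 1)` is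
proportional to `(x ^ q, 1)`. Since the `q`-power Frobenius is a ring endomorphism fixing the
entries of `M`, iterating gives `M ^ k (x, 1) = μ (x ^ q ^ k, 1)`. For `k = u` the matrix
`M ^ u` is a nonzero scalar, so `x ^ q ^ u = x`. Taking for `x` the root of `f` in `F[X] / (f)`
gives `f ∣ X ^ q ^ u - X`, with no separability argument.
-/

theorem Matrix.exists_pow_mulVec_eq_smul_comp_iterate {n A : Type*} [Fintype n]
    [DecidableEq n] [CommRing A] (φ : A →+* A) {N : Matrix n n A} (hN : N.map φ = N)
    {v : n → A} {l : A} (hv : N *ᵥ v = l • (φ ∘ v)) (k : ℕ) :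
    ∃ μ : A, N ^ k *ᵥ v = μ • (φ^[k] ∘ v) := by
  induction k with
  | zero => exact ⟨1, by simp⟩
  | succ k ih =>
    obtain ⟨μ, hμ⟩ := ih
    have hNk : (N ^ k).map φ = N ^ k := by
      rw [← RingHom.mapMatrix_apply, map_pow, RingHom.mapMatrix_apply, hN]
    have hφ : N ^ k *ᵥ (φ ∘ v) = φ ∘ (N ^ k *ᵥ v) := by
      ext i
      rw [Function.comp_apply, RingHom.map_mulVec, hNk]
    refine ⟨l * φ μ, ?_⟩
    rw [pow_succ, ← mulVec_mulVec, hv, mulVec_smul, hφ, hμ]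
    ext i
    simp only [Pi.smul_apply, Function.comp_apply, smul_eq_mul, map_mul,
      Function.iterate_succ_apply']
    ring

section FiniteField

variable {F A : Type*} [Field F] [Fintype F] [CommRing A] [Algebra F A]

theorem exists_pow_map_mulVec_eq_smul_pow_card_pow (M : Matrix (Fin 2) (Fin 2) F) {x : A}
    (hx : (algebraMap F A (M 1 0) * x + algebraMap F A (M 1 1)) * x ^ Fintype.card F =
      algebraMap F A (M 0 0) * x + algebraMap F A (M 0 1)) (k : ℕ) :
    ∃ μ : A,
      (M ^ k).map (algebraMap F A) *ᵥ ![x, 1] = μ • ![x ^ Fintype.card F ^ k, 1] := by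
  let φ : A →+* A := FiniteField.frobeniusAlgHom F A
  have hφ : ∀ y : A, φ^[k] y = y ^ Fintype.card F ^ k := fun y =>
    congr_fun (pow_iterate (Fintype.card F) k) y
  have hN : (M.map (algebraMap F A)).map φ = M.map (algebraMap F A) := by
    ext i j
    exact (FiniteField.frobeniusAlgHom F A).commutes (M i j)
  have hv : M.map (algebraMap F A) *ᵥ ![x, 1] =
      (algebraMap F A (M 1 0) * x + algebraMap F A (M 1 1)) • (φ ∘ ![x, 1]) := by
    ext i
    fin_cases i
    · simp only [Fin.zero_eta, mulVec_fin_two, map_apply, cons_val_zero, cons_val_one,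
        cons_val_fin_one, mul_one, RingHom.coe_coe, FiniteField.coe_frobeniusAlgHom,
        Pi.smul_apply, Function.comp_apply, smul_eq_mul, φ]
      linear_combination -hx
    · simp [φ, FiniteField.coe_frobeniusAlgHom]
  obtain ⟨μ, hμ⟩ := (M.map (algebraMap F A)).exists_pow_mulVec_eq_smul_comp_iterate φ hN hv k
  refine ⟨μ, ?_⟩
  rw [← RingHom.mapMatrix_apply, map_pow, RingHom.mapMatrix_apply, hμ]
  ext i
  fin_cases i <;> simp [hφ]

theorem pow_card_pow_eq_self_of_pow_mem_center (M : GL (Fin 2) F) {k : ℕ}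
    (hk : M ^ k ∈ Subgroup.center (GL (Fin 2) F)) {x : A}
    (hx : (algebraMap F A (M 1 0) * x + algebraMap F A (M 1 1)) * x ^ Fintype.card F =
      algebraMap F A (M 0 0) * x + algebraMap F A (M 0 1)) :
    x ^ Fintype.card F ^ k = x := by
  rw [GeneralLinearGroup.center_eq_range_scalar] at hk
  obtain ⟨r, hr⟩ := hk
  obtain ⟨μ, hμ⟩ := exists_pow_map_mulVec_eq_smul_pow_card_pow M.val hx k
  rw [← Units.val_pow_eq_pow_val, ← hr] at hμ
  have h1 : algebraMap F A r = μ := by simpa using congr_fun hμ 1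
  have h0 : algebraMap F A r * x = μ * x ^ Fintype.card F ^ k := by simpa using congr_fun hμ 0
  rw [← h1] at h0
  exact ((r.isUnit.map (algebraMap F A)).mul_left_cancel h0).symm

end FiniteField

theorem stmt_3_general (q : ℕ)
    (F : Type*) [Field F] [Fintype F] (hF : Fintype.card F = q)
    (M : GL (Fin 2) F) (a b c d : F)
    (ha : a = (M : Matrix (Fin 2) (Fin 2) F) 0 0) (hb : b = (M : Matrix (Fin 2) (Fin 2) F) 0 1)
    (hc : c = (M : Matrix (Fin 2) (Fin 2) F) 1 0) (hd : d = (M : Matrix (Fin 2) (Fin 2) F) 1 1)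
    (u : ℕ)
    (hu : u = orderOf (QuotientGroup.mk M :
      GL (Fin 2) F ⧸ Subgroup.center (GL (Fin 2) F))) :
    (C c * X ^ (q + 1) + C d * X ^ q - C a * X - C b : Polynomial F) ∣ X ^ q ^ u - X := by
  set f : F[X] := C c * X ^ (q + 1) + C d * X ^ q - C a * X - C b
  have hcenter : M ^ u ∈ Subgroup.center (GL (Fin 2) F) := by
    rw [← QuotientGroup.eq_one_iff, QuotientGroup.mk_pow, hu, pow_orderOf_eq_one]
  have hroot : (algebraMap F (AdjoinRoot f) c * AdjoinRoot.root f + algebraMap F _ d) *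
      AdjoinRoot.root f ^ q = algebraMap F _ a * AdjoinRoot.root f + algebraMap F _ b := by
    have h := AdjoinRoot.eval₂_root f
    simp only [f, eval₂_sub, eval₂_add, eval₂_mul, eval₂_C, eval₂_X_pow, eval₂_X,
      ← AdjoinRoot.algebraMap_eq] at h
    linear_combination h
  subst hF ha hb hc hd
  rw [← AdjoinRoot.mk_eq_zero, map_sub, map_pow, AdjoinRoot.mk_X,
    pow_card_pow_eq_self_of_pow_mem_center M hcenter hroot, sub_self]

theorem stmt_3 (p s : ℕ) (hp : p.Prime) (hs : 1 ≤ s) (q : ℕ) (hq : q = p ^ s)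
    (F : Type*) [Field F] [Fintype F] (hF : Fintype.card F = q)
    (M : GL (Fin 2) F) (a b c d : F)
    (ha : a = (M : Matrix (Fin 2) (Fin 2) F) 0 0) (hb : b = (M : Matrix (Fin 2) (Fin 2) F) 0 1)
    (hc : c = (M : Matrix (Fin 2) (Fin 2) F) 1 0) (hd : d = (M : Matrix (Fin 2) (Fin 2) F) 1 1)
    (u : ℕ)
    (hu : u = orderOf (QuotientGroup.mk M :
      GL (Fin 2) F ⧸ Subgroup.center (GL (Fin 2) F))) :
    (C c * X ^ (q + 1) + C d * X ^ q - C a * X - C b : Polynomial F) ∣ X ^ q ^ u - X :=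
  stmt_3_general q F hF M a b c d ha hb hc hd u hu
end

section
/- Let p be prime, q = p^s, M = [[a,b],[c,d]] ∈ GL_2(𝔽_q) of order v, and f(x) = c x^{q+1} + d x^q - a x - b. Working modulo f(x) in 𝔽_q[x]/(f), for every i ≥ 0 one has x^{q^i} ≡ (e x + f')/(g x + h) where [[e,f'],[g,h]] = M^i, in the sense that (g x + h) x^{q^i} ≡ e x + f' modulo f(x). -/
open Polynomial

theorem stmt_4 (p s : ℕ) (hp : p.Prime) (hs : 1 ≤ s) (q : ℕ) (hq : q = p ^ s)
    (F : Type*) [Field F] [Fintype F] (hF : Fintype.card F = q)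
    (M : GL (Fin 2) F) (a b c d : F)
    (ha : a = (M : Matrix (Fin 2) (Fin 2) F) 0 0) (hb : b = (M : Matrix (Fin 2) (Fin 2) F) 0 1)
    (hc : c = (M : Matrix (Fin 2) (Fin 2) F) 1 0) (hd : d = (M : Matrix (Fin 2) (Fin 2) F) 1 1)
    (v : ℕ) (hv : v = orderOf M) :
    ∀ i : ℕ,
      (C c * X ^ (q + 1) + C d * X ^ q - C a * X - C b : Polynomial F) ∣
        (C ((M ^ i : GL (Fin 2) F) 1 0) * X + C ((M ^ i : GL (Fin 2) F) 1 1)) * X ^ q ^ i -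
          (C ((M ^ i : GL (Fin 2) F) 0 0) * X + C ((M ^ i : GL (Fin 2) F) 0 1)) := by
  -- characteristic p
  have hpF : (p : F) = 0 := by
    have h0 : ((Fintype.card F : ℕ) : F) = 0 := Nat.cast_card_eq_zero F
    rw [hF, hq] at h0
    push_cast at h0
    exact pow_eq_zero_iff (by omega) |>.mp h0
  haveI := Fact.mk hp
  haveI hcharF : CharP F p := (CharP.charP_iff_prime_eq_zero hp).2 hpF
  have hqpos : 0 < q := by rw [hq]; exact pow_pos hp.pos s
  have hcardpow : ∀ x : F, x ^ q = x := by
    intro x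
    rw [← hF]; exact FiniteField.pow_card x
  intro i
  induction i with
  | zero =>
      simp [Matrix.one_apply]
  | succ i ih =>
      set f : Polynomial F := C c * X ^ (q + 1) + C d * X ^ q - C a * X - C b with hf
      set e0 : F := (M ^ i : GL (Fin 2) F) 0 0
      set f0 : F := (M ^ i : GL (Fin 2) F) 0 1
      set g0 : F := (M ^ i : GL (Fin 2) F) 1 0
      set h0 : F := (M ^ i : GL (Fin 2) F) 1 1
      -- entry relations for M^(i+1) = M^i * M
      have hmat : ((M ^ (i + 1) : GL (Fin 2) F) : Matrix (Fin 2) (Fin 2) F) =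
          ((M ^ i : GL (Fin 2) F) : Matrix (Fin 2) (Fin 2) F) *
            (M : Matrix (Fin 2) (Fin 2) F) := by
        rw [pow_succ]; rfl
      have h00 : (M ^ (i + 1) : GL (Fin 2) F) 0 0 = e0 * a + f0 * c := by
        rw [hmat, Matrix.mul_apply, Fin.sum_univ_two, ha, hc]
      have h01 : (M ^ (i + 1) : GL (Fin 2) F) 0 1 = e0 * b + f0 * d := by
        rw [hmat, Matrix.mul_apply, Fin.sum_univ_two, hb, hd]
      have h10 : (M ^ (i + 1) : GL (Fin 2) F) 1 0 = g0 * a + h0 * c := by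
        rw [hmat, Matrix.mul_apply, Fin.sum_univ_two, ha, hc]
      have h11 : (M ^ (i + 1) : GL (Fin 2) F) 1 1 = g0 * b + h0 * d := by
        rw [hmat, Matrix.mul_apply, Fin.sum_univ_two, hb, hd]
      -- take the q-th power of the induction hypothesis
      have hdvdq : f ∣ ((C g0 * X + C h0) * X ^ q ^ i -
          (C e0 * X + C f0)) ^ q := dvd_pow ih hqpos.ne'
      have hpowid : ((C g0 * X + C h0) * X ^ q ^ i - (C e0 * X + C f0)) ^ q =
          (C g0 * X ^ q + C h0) * X ^ q ^ (i + 1) - (C e0 * X ^ q + C f0) := by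
        subst hq
        rw [sub_pow_char_pow, mul_pow, add_pow_char_pow, add_pow_char_pow, mul_pow, mul_pow,
          ← map_pow, ← map_pow, ← map_pow, ← map_pow, ← pow_mul, ← pow_succ]
        rw [hcardpow, hcardpow, hcardpow, hcardpow]
      rw [hpowid] at hdvdq
      obtain ⟨k, hk⟩ := hdvdq
      refine ⟨(C c * X + C d) * k - (C g0 * X ^ q ^ (i + 1) - C e0), ?_⟩
      rw [h00, h01, h10, h11, map_add, map_add, map_add, map_add,
        map_mul, map_mul, map_mul, map_mul, map_mul, map_mul, map_mul, map_mul]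
      linear_combination (C c * X + C d) * hk
end

section
/- Let q = 2^k and let U be a subgroup of the multiplicative group of 𝔽_q of order n. If n^4 > (q - n)^3, then there exists α ∈ U with α + 1 ∈ U. -/
/-!
Put `m = (q - 1) / n` and let `η` be a complex multiplicative character of `F` of order `m`.
Since `Fˣ` is cyclic, `η` is trivial only on `U`, so `∑_{i<m} η^i` vanishes off `U`. If no
`α ∈ U` has `α + 1 = 1 - α ∈ U`, expanding `∑_x (∑_i η^i x) (∑_j η^j (1 - x))` shows that
`∑_{i,j<m} J(η^i, η^j) = 0`. But `J(1, 1) = q - 2`, `J(1, χ) = J(χ, 1) = -1`,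
`J(χ, χ⁻¹) = -χ(-1) = -1` in characteristic 2, and the remaining `(m - 1)(m - 2)` Jacobi sums
have absolute value `√q`; so the real part of the double sum is at least
`q + 1 - 3m - (m - 1)(m - 2)√q`, which is positive because `n^4 > (q - n)^3` forces
`n > (m - 1)^3`.
-/

open Finset

theorem Subgroup.mem_iff_pow_card_eq_one {G : Type*} [CommGroup G] [IsCyclic G] [Finite G]
    (U : Subgroup G) {x : G} : x ∈ U ↔ x ^ Nat.card U = 1 := by
  have hU : U = (powMonoidHom (Nat.card U) : G →* G).ker := by
    refine Subgroup.eq_of_le_of_card_ge (fun u hu => ?_) ?_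
    · exact orderOf_dvd_iff_pow_eq_one.1 (Subgroup.orderOf_dvd_natCard U hu)
    · rw [IsCyclic.card_powMonoidHom_ker, Nat.gcd_eq_right (Subgroup.card_subgroup_dvd_card U)]
  exact ⟨fun hx => by rw [hU] at hx; simpa using hx, fun hx => by rw [hU]; simpa using hx⟩

namespace MulChar

variable {F R : Type*} [Field F] [Fintype F] [CommRing R]

theorem exists_mem_eq_of_apply_eq_one [Nontrivial R] {η : MulChar F R} {U : Subgroup Fˣ}
    (hU : Nat.card U * orderOf η = Nat.card Fˣ) {x : F} (hx : η x = 1) :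
    ∃ u ∈ U, (u : F) = x := by
  obtain ⟨u, rfl⟩ : IsUnit x := by
    by_contra hx'
    simp [η.map_nonunit hx'] at hx
  refine ⟨u, (U.mem_iff_pow_card_eq_one).2 ?_, rfl⟩
  obtain ⟨g, hg⟩ := IsCyclic.exists_generator (α := Fˣ)
  obtain ⟨t, rfl⟩ := mem_powers_iff_mem_zpowers.2 (hg u)
  have hηt : η ^ t = 1 := by
    rw [eq_iff hg, pow_apply_coe, one_apply_coe, ← map_pow, ← Units.val_pow_eq_pow_val]
    exact hx
  obtain ⟨s, rfl⟩ := orderOf_dvd_of_pow_eq_one hηt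
  rw [← pow_mul, show orderOf η * s * Nat.card U = Nat.card Fˣ * s by rw [← hU]; ring, pow_mul,
    pow_card_eq_one', one_pow]

theorem sum_range_pow_apply_eq_zero [IsDomain R] {η : MulChar F R} {m : ℕ} (hm : η ^ m = 1)
    {x : F} (hx : η x ≠ 1) : ∑ i ∈ range m, (η ^ i) x = 0 := by
  by_cases hux : IsUnit x
  · obtain ⟨u, rfl⟩ := hux
    have hgeom := geom_sum_mul (η u) m
    rw [← pow_apply_coe, hm, one_apply_coe, sub_self] at hgeom
    simpa only [pow_apply_coe, mul_eq_zero, sub_eq_zero, hx, or_false] using hgeom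
  · exact sum_eq_zero fun i _ => (η ^ i).map_nonunit hux

end MulChar

section JacobiSum

variable {F R : Type*} [Field F] [Fintype F] [CommRing R]

theorem sum_range_sum_range_jacobiSum_pow_eq_zero [IsDomain R] {η : MulChar F R} {m : ℕ}
    (hm : η ^ m = 1) (h : ∀ x, η x ≠ 1 ∨ η (1 - x) ≠ 1) :
    ∑ i ∈ range m, ∑ j ∈ range m, jacobiSum (η ^ i) (η ^ j) = 0 := by
  have hexpand : ∑ i ∈ range m, ∑ j ∈ range m, jacobiSum (η ^ i) (η ^ j) =
      ∑ x, (∑ i ∈ range m, (η ^ i) x) * ∑ j ∈ range m, (η ^ j) (1 - x) := by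
    simp only [jacobiSum, sum_mul_sum]
    exact (sum_congr rfl fun i _ => sum_comm).trans sum_comm
  rw [hexpand]
  refine sum_eq_zero fun x _ => ?_
  rcases h x with hx | hx
  · rw [MulChar.sum_range_pow_apply_eq_zero hm hx, zero_mul]
  · rw [MulChar.sum_range_pow_apply_eq_zero hm hx, mul_zero]

theorem norm_jacobiSum_eq_sqrt {χ ψ : MulChar F ℂ} (hχ : χ ≠ 1) (hψ : ψ ≠ 1)
    (hχψ : χ * ψ ≠ 1) : ‖jacobiSum χ ψ‖ = √(Fintype.card F) := by
  have hchar : ringChar ℂ ≠ ringChar F := by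
    rw [ringChar.eq ℂ 0]
    exact (CharP.ringChar_ne_zero_of_finite F).symm
  have hconj : jacobiSum χ⁻¹ ψ⁻¹ = starRingEnd ℂ (jacobiSum χ ψ) := by
    rw [← MulChar.star_eq_inv, ← MulChar.star_eq_inv]
    exact jacobiSum_ringHomComp χ ψ _
  have hsq := jacobiSum_mul_jacobiSum_inv hchar hχ hψ hχψ
  rw [hconj, Complex.mul_conj'] at hsq
  rw [← Real.sqrt_sq (norm_nonneg _)]
  exact_mod_cast congrArg Real.sqrt (by exact_mod_cast hsq)

variable {η : MulChar F ℂ} {m : ℕ}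

theorem sum_range_jacobiSum_one_pow (hη : orderOf η = m) :
    ∑ j ∈ range m, jacobiSum 1 (η ^ j) = Fintype.card F - 1 - m := by
  have hm : 0 < m := hη ▸ orderOf_pos η
  have h0 : 0 ∈ range m := mem_range.2 hm
  rw [← add_sum_erase _ _ h0, pow_zero, jacobiSum_one_one,
    sum_congr rfl fun j hj => jacobiSum_one_nontrivial (pow_ne_one_of_lt_orderOf
      (ne_of_mem_erase hj) (hη ▸ mem_range.1 (mem_of_mem_erase hj))),
    sum_const, card_erase_of_mem h0, card_range, nsmul_eq_mul, Nat.cast_pred hm]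
  ring

theorem norm_sum_range_jacobiSum_pow_add_two_le [CharP F 2] (hη : orderOf η = m) {i : ℕ}
    (hi : i ∈ (range m).erase 0) :
    ‖∑ j ∈ range m, jacobiSum (η ^ i) (η ^ j) + 2‖ ≤ ((m : ℝ) - 2) * √(Fintype.card F) := by
  have hpow : ∀ j ∈ (range m).erase 0, η ^ j ≠ 1 := fun j hj =>
    pow_ne_one_of_lt_orderOf (ne_of_mem_erase hj) (hη ▸ mem_range.1 (mem_of_mem_erase hj))
  have him : 0 < i ∧ i < m :=
    ⟨Nat.pos_of_ne_zero (ne_of_mem_erase hi), mem_range.1 (mem_of_mem_erase hi)⟩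
  have h0 : 0 ∈ range m := mem_range.2 (by omega)
  have hmi : m - i ∈ (range m).erase 0 := mem_erase.2 ⟨by omega, mem_range.2 (by omega)⟩
  have hinv : η ^ (m - i) = (η ^ i)⁻¹ := by
    rw [eq_inv_iff_mul_eq_one, ← pow_add, Nat.sub_add_cancel him.2.le, ← hη, pow_orderOf_eq_one]
  have hgen : ∀ j ∈ ((range m).erase 0).erase (m - i),
      ‖jacobiSum (η ^ i) (η ^ j)‖ = √(Fintype.card F) := by
    intro j hj
    refine norm_jacobiSum_eq_sqrt (hpow i hi) (hpow j (mem_of_mem_erase hj)) ?_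
    simp only [mem_erase, mem_range] at hj
    rw [← pow_add, Ne, ← orderOf_dvd_iff_pow_eq_one, hη]
    intro hdvd
    have := Nat.eq_of_dvd_of_lt_two_mul (by omega) hdvd (by omega)
    omega
  rw [← add_sum_erase _ _ h0, ← add_sum_erase _ _ hmi, pow_zero, jacobiSum_comm,
    jacobiSum_one_nontrivial (hpow i hi), hinv, jacobiSum_nontrivial_inv (hpow i hi),
    CharTwo.neg_eq (1 : F), MulChar.map_one]
  calc ‖-1 + (-1 + ∑ j ∈ ((range m).erase 0).erase (m - i), jacobiSum (η ^ i) (η ^ j)) + 2‖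
      = ‖∑ j ∈ ((range m).erase 0).erase (m - i), jacobiSum (η ^ i) (η ^ j)‖ := by ring_nf
    _ ≤ ∑ j ∈ ((range m).erase 0).erase (m - i), √(Fintype.card F) :=
      norm_sum_le_of_le _ fun j hj => (hgen j hj).le
    _ = ((m : ℝ) - 2) * √(Fintype.card F) := by
      rw [sum_const, card_erase_of_mem hmi, card_erase_of_mem h0, card_range, nsmul_eq_mul]
      congr 1
      rw [Nat.sub_sub, Nat.cast_sub (by omega)]
      norm_num

theorem norm_sum_range_sum_range_jacobiSum_pow_sub_le [CharP F 2] (hη : orderOf η = m) :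
    ‖∑ i ∈ range m, ∑ j ∈ range m, jacobiSum (η ^ i) (η ^ j) - (Fintype.card F + 1 - 3 * m)‖ ≤
      ((m : ℝ) - 1) * ((m : ℝ) - 2) * √(Fintype.card F) := by
  have hm : 0 < m := hη ▸ orderOf_pos η
  have h0 : 0 ∈ range m := mem_range.2 hm
  have hcard : #((range m).erase 0) = m - 1 := by rw [card_erase_of_mem h0, card_range]
  rw [← add_sum_erase _ _ h0, pow_zero, sum_range_jacobiSum_one_pow hη]
  calc _ = ‖∑ i ∈ (range m).erase 0, (∑ j ∈ range m, jacobiSum (η ^ i) (η ^ j) + 2)‖ := by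
        rw [sum_add_distrib, sum_const, nsmul_eq_mul, hcard, Nat.cast_pred hm]
        ring_nf
    _ ≤ ∑ i ∈ (range m).erase 0, ((m : ℝ) - 2) * √(Fintype.card F) :=
        norm_sum_le_of_le _ fun i hi => norm_sum_range_jacobiSum_pow_add_two_le hη hi
    _ = ((m : ℝ) - 1) * ((m : ℝ) - 2) * √(Fintype.card F) := by
        rw [sum_const, nsmul_eq_mul, hcard, Nat.cast_pred hm, mul_assoc]

end JacobiSum

theorem sub_one_mul_sub_two_mul_sqrt_lt_of_le {m q : ℝ} (hm : 3 ≤ m)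
    (hq : m * (m - 1) ^ 3 + 2 ≤ q) : (m - 1) * (m - 2) * √q < q + 1 - 3 * m := by
  have hq0 : 0 ≤ q := by nlinarith [pow_pos (show (0 : ℝ) < m - 1 by linarith) 3]
  have hs := Real.sq_sqrt hq0
  have h2 := sq_nonneg (√q - (m - 1) ^ 2)
  nlinarith [mul_nonneg (show (0 : ℝ) ≤ m - 2 by linarith) h2, sq_nonneg (m - 1), sq_nonneg (m - 3),
    mul_pos (show (0 : ℝ) < m - 1 by linarith) (show (0 : ℝ) < m - 2 by linarith),
    Real.sqrt_nonneg q]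

theorem sub_one_mul_sub_two_mul_sqrt_lt {n m q : ℕ} (hm : m ≠ 0) (hq : q = n * m + 1)
    (h : (q - n) ^ 3 < n ^ 4) : ((m : ℝ) - 1) * ((m : ℝ) - 2) * √q < q + 1 - 3 * m := by
  have hqn : q - n = n * (m - 1) + 1 := by
    have := Nat.le_mul_of_pos_right n (Nat.pos_of_ne_zero hm)
    rw [hq, Nat.mul_sub_one]
    omega
  rw [hqn] at h
  rcases (show m = 1 ∨ m = 2 ∨ 3 ≤ m by omega) with rfl | rfl | hm3
  · have hn : (2 : ℝ) ≤ n := by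
      have : 2 ≤ n := by
        by_contra!
        interval_cases n <;> simp at h
      exact_mod_cast this
    rw [hq]; push_cast; linarith
  · have hn : (3 : ℝ) ≤ n := by
      have : 3 ≤ n := by
        by_contra!
        interval_cases n <;> simp at h
      exact_mod_cast this
    rw [hq]; push_cast; linarith
  · have hn : (m - 1) ^ 3 < n := by
      have : (n * (m - 1)) ^ 3 < n ^ 3 * n :=
        lt_of_le_of_lt (Nat.pow_le_pow_left (Nat.le_add_right _ 1) 3) (by rw [← pow_succ]; exact h)
      rw [mul_pow] at this
      exact Nat.lt_of_mul_lt_mul_left this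
    apply sub_one_mul_sub_two_mul_sqrt_lt_of_le (by exact_mod_cast hm3)
    have hn' : ((m : ℝ) - 1) ^ 3 + 1 ≤ n := by
      rw [← Nat.cast_pred (by omega)]; exact_mod_cast hn
    have hm' : (3 : ℝ) ≤ m := by exact_mod_cast hm3
    rw [hq]; push_cast
    nlinarith [mul_le_mul_of_nonneg_right hn' (by linarith : (0 : ℝ) ≤ m)]

theorem stmt_5_general (k : ℕ) (F : Type*) [Field F] [Fintype F]
    (q : ℕ) (hq : q = 2 ^ k) (hF : Fintype.card F = q)
    (U : Subgroup Fˣ) (n : ℕ) (hn : Nat.card U = n)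
    (h : n ^ 4 > (q - n) ^ 3) :
    ∃ α β : Fˣ, α ∈ U ∧ β ∈ U ∧ (β : F) = (α : F) + 1 := by
  classical
  have : CharP F 2 := charP_of_card_eq_prime_pow (hF.trans hq)
  have hq1 : 1 < q := hF ▸ Fintype.one_lt_card
  obtain ⟨m, hm⟩ : n ∣ q - 1 := by
    rw [← hn, ← hF, ← Fintype.card_units, ← Nat.card_eq_fintype_card]
    exact U.card_subgroup_dvd_card
  have hm0 : m ≠ 0 := by
    rintro rfl
    omega
  obtain ⟨η, hη⟩ := MulChar.exists_mulChar_orderOf F (hF ▸ Dvd.intro_left n hm.symm)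
    (Complex.isPrimitiveRoot_exp m hm0)
  have hUη : Nat.card U * orderOf η = Nat.card Fˣ := by
    rw [hn, hη, ← hm, Nat.card_eq_fintype_card, Fintype.card_units, hF]
  by_contra hne
  have hsum := sum_range_sum_range_jacobiSum_pow_eq_zero (hη ▸ pow_orderOf_eq_one η)
    fun x => by
      by_contra! hx
      obtain ⟨α, hα, rfl⟩ := MulChar.exists_mem_eq_of_apply_eq_one hUη hx.1
      obtain ⟨β, hβ, hβα⟩ := MulChar.exists_mem_eq_of_apply_eq_one hUη hx.2
      exact hne ⟨α, β, hα, hβ, by rw [hβα, CharTwo.sub_eq_add, add_comm]⟩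
  have hbound := norm_sum_range_sum_range_jacobiSum_pow_sub_le hη
  rw [hsum, zero_sub, norm_neg, hF] at hbound
  have hmain : (q : ℝ) + 1 - 3 * m ≤ ‖(q : ℂ) + 1 - 3 * m‖ := by
    simpa using Complex.re_le_norm ((q : ℂ) + 1 - 3 * m)
  linarith [sub_one_mul_sub_two_mul_sqrt_lt hm0 (by omega) h]

theorem stmt_5 (k : ℕ) (hk : 1 ≤ k) (F : Type*) [Field F] [Fintype F]
    (q : ℕ) (hq : q = 2 ^ k) (hF : Fintype.card F = q)
    (U : Subgroup Fˣ) (n : ℕ) (hn : Nat.card U = n)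
    (h : n ^ 4 > (q - n) ^ 3) :
    ∃ α β : Fˣ, α ∈ U ∧ β ∈ U ∧ (β : F) = (α : F) + 1 :=
  stmt_5_general k F q hq hF U n hn h
end

section
/- Let q = 2^s, t ≥ 4, and n = (q^t - 1)/(q - 1). Then there exists α in the algebraic closure of 𝔽_2 with α^n = 1 and (α+1)^n = 1. -/
/-!
The solutions of `x ^ n = 1` in `𝔽_{q^t}` form the subgroup of index `d = q - 1` of the cyclic
group `𝔽_{q^t}ˣ`, i.e. the kernel of a multiplicative character `χ` of order `d`. Orthogonality of
the powers of `χ` turns the number of `x` with both `x` and `1 - x` in this kernel into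
`d⁻² ∑_{j,k < d} J(χ^j, χ^k)`. The term `J(1, 1) = q^t - 2` dominates: the other `d² - 1`
Jacobi sums have absolute value at most `√(q^t)`, and `(d² - 1) √(q^t) < q^t - 2` because
`√(q^t) ≥ q²` for `t ≥ 4`. In characteristic two, `1 - x = x + 1`.
-/

open Finset

namespace MulChar

lemma orderOf_apply_eq_orderOf {M R : Type*} [CommMonoid M] [CommRing R] {g : Mˣ}
    (hg : ∀ a, a ∈ Submonoid.powers g) (χ : MulChar M R) : orderOf (χ g) = orderOf χ := by
  refine orderOf_eq_orderOf_iff.mpr fun k => ⟨fun h => ?_, fun h => ?_⟩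
  · ext a
    obtain ⟨m, rfl⟩ := hg a
    rw [pow_apply_coe, one_apply_coe]
    simp only [Units.val_pow_eq_pow_val, map_pow]
    rw [← pow_mul, mul_comm, pow_mul, h, one_pow]
  · rw [← pow_apply_coe, h, one_apply_coe]

variable {F : Type*} [Field F] [Fintype F]

lemma star_jacobiSum (χ ψ : MulChar F ℂ) : star (jacobiSum χ ψ) = jacobiSum χ⁻¹ ψ⁻¹ := by
  simp only [jacobiSum, star_sum, star_mul', star_apply']

lemma norm_apply_neg_one (χ : MulChar F ℂ) : ‖χ (-1)‖ = 1 := by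
  classical
  exact Complex.norm_eq_one_of_mem_rootsOfUnity (χ.apply_mem_rootsOfUnity (-1 : Fˣ))

lemma norm_jacobiSum_eq_sqrt_card {χ ψ : MulChar F ℂ} (hχ : χ ≠ 1) (hψ : ψ ≠ 1)
    (hχψ : χ * ψ ≠ 1) : ‖jacobiSum χ ψ‖ = √(Fintype.card F) := by
  have hchar : ringChar ℂ ≠ ringChar F := by
    rw [ringChar.eq_zero]
    exact (CharP.ringChar_ne_zero_of_finite F).symm
  have h := congrArg norm (jacobiSum_mul_jacobiSum_inv hchar hχ hψ hχψ)
  rw [← star_jacobiSum, norm_mul, norm_star, ← sq, Complex.norm_natCast] at h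
  rw [← h, Real.sqrt_sq (norm_nonneg _)]

lemma norm_jacobiSum_le_sqrt_card {χ ψ : MulChar F ℂ} (h : χ ≠ 1 ∨ ψ ≠ 1) :
    ‖jacobiSum χ ψ‖ ≤ √(Fintype.card F) := by
  have hone : (1 : ℝ) ≤ √(Fintype.card F) := by
    rw [Real.one_le_sqrt]
    exact_mod_cast Fintype.card_pos
  by_cases hχ : χ = 1
  · rw [hχ, jacobiSum_one_nontrivial (h.resolve_left (not_not.mpr hχ)), norm_neg, norm_one]
    exact hone
  by_cases hψ : ψ = 1
  · rw [hψ, jacobiSum_comm, jacobiSum_one_nontrivial hχ, norm_neg, norm_one]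
    exact hone
  by_cases hχψ : χ * ψ = 1
  · rw [eq_inv_of_mul_eq_one_right hχψ, jacobiSum_nontrivial_inv hχ, norm_neg,
      norm_apply_neg_one]
    exact hone
  exact (norm_jacobiSum_eq_sqrt_card hχ hψ hχψ).le

variable {n d : ℕ}

lemma exists_orderOf_eq (hnd : n * d = Fintype.card F - 1) :
    ∃ χ : MulChar F ℂ, orderOf χ = d := by
  have : NeZero (Monoid.exponent Fˣ : ℂ) :=
    ⟨Nat.cast_ne_zero.mpr Monoid.exponent_ne_zero_of_finite⟩
  obtain ⟨Φ⟩ := mulEquiv_units F ℂ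
  obtain ⟨g, hg⟩ := IsCyclic.exists_monoid_generator (α := Fˣ)
  have hn : n ≠ 0 := by rintro rfl; have := Fintype.one_lt_card (α := F); omega
  refine ⟨Φ.symm (g ^ n), ?_⟩
  rw [MulEquiv.orderOf_eq, orderOf_pow, orderOf_eq_card_of_forall_mem_powers hg, Nat.card_units,
    Nat.card_eq_fintype_card, ← hnd, Nat.gcd_eq_right (dvd_mul_right n d),
    Nat.mul_div_cancel_left d (Nat.pos_of_ne_zero hn)]

lemma apply_eq_one_iff_pow_eq_one {χ : MulChar F ℂ} (hχ : orderOf χ = d)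
    (hnd : n * d = Fintype.card F - 1) (x : F) : χ x = 1 ↔ x ^ n = 1 := by
  have hn : n ≠ 0 := by rintro rfl; have := Fintype.one_lt_card (α := F); omega
  rcases eq_or_ne x 0 with rfl | hx
  · simp [hn]
  obtain ⟨g, hg⟩ := IsCyclic.exists_monoid_generator (α := Fˣ)
  obtain ⟨m, hm⟩ := hg (Units.mk0 x hx)
  have hgx : (g : F) ^ m = x := by
    rw [← Units.val_pow_eq_pow_val, ← Units.val_mk0 hx]
    exact congrArg _ hm
  have hordg : orderOf g = n * d := by
    rw [orderOf_eq_card_of_forall_mem_powers hg, Nat.card_units, Nat.card_eq_fintype_card, hnd]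
  calc χ x = 1 ↔ χ g ^ m = 1 := by rw [← hgx, map_pow]
    _ ↔ d ∣ m := by rw [← hχ, ← orderOf_apply_eq_orderOf hg, orderOf_dvd_iff_pow_eq_one]
    _ ↔ n * d ∣ m * n := by rw [mul_comm m, Nat.mul_dvd_mul_iff_left (Nat.pos_of_ne_zero hn)]
    _ ↔ x ^ n = 1 := by
      rw [← hordg, orderOf_dvd_iff_pow_eq_one, ← hgx, pow_mul, ← Units.val_pow_eq_pow_val,
        ← Units.val_pow_eq_pow_val, Units.val_eq_one]

variable {χ : MulChar F ℂ}

lemma norm_sum_jacobiSum_pow_sub_le (hχ : orderOf χ = d) (hd : 0 < d) :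
    ‖∑ p ∈ range d ×ˢ range d, jacobiSum (χ ^ p.1) (χ ^ p.2) - (Fintype.card F - 2)‖ ≤
      ((d : ℝ) ^ 2 - 1) * √(Fintype.card F) := by
  have h00 : ((0, 0) : ℕ × ℕ) ∈ range d ×ˢ range d := by simp [hd]
  rw [← add_sum_erase _ _ h00, pow_zero, jacobiSum_one_one, add_sub_cancel_left]
  calc ‖∑ p ∈ (range d ×ˢ range d).erase (0, 0), jacobiSum (χ ^ p.1) (χ ^ p.2)‖
      ≤ ∑ _p ∈ (range d ×ˢ range d).erase (0, 0), √(Fintype.card F) := by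
        refine norm_sum_le_of_le _ fun p hp => norm_jacobiSum_le_sqrt_card ?_
        obtain ⟨hp0, hp⟩ := mem_erase.mp hp
        simp only [mem_product, mem_range] at hp
        by_contra! h
        refine hp0 (Prod.ext ?_ ?_) <;> by_contra hne
        · exact pow_ne_one_of_lt_orderOf hne (hχ ▸ hp.1) h.1
        · exact pow_ne_one_of_lt_orderOf hne (hχ ▸ hp.2) h.2
    _ = ((d : ℝ) ^ 2 - 1) * √(Fintype.card F) := by
        rw [sum_const, card_erase_of_mem h00, card_product, card_range, nsmul_eq_mul,
          Nat.cast_sub (Nat.one_le_iff_ne_zero.mpr (by positivity)), Nat.cast_mul, sq, Nat.cast_one]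

variable [DecidableEq F]

lemma sum_range_pow_apply (hχ : orderOf χ = d) (hnd : n * d = Fintype.card F - 1) (x : F) :
    ∑ j ∈ range d, (χ ^ j) x = if x ^ n = 1 then (d : ℂ) else 0 := by
  have hker := apply_eq_one_iff_pow_eq_one hχ hnd
  rcases eq_or_ne x 0 with rfl | hx
  · rw [if_neg (by rw [← hker, MulChar.map_zero]; exact zero_ne_one)]
    exact sum_eq_zero fun j _ => MulChar.map_zero _
  have hval : ∀ j, (χ ^ j) x = χ x ^ j := fun j => pow_apply_coe χ j (Units.mk0 x hx)
  simp only [hval]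
  split_ifs with h
  · simp [(hker x).mpr h]
  · have hd : χ x ^ d = 1 := by rw [← hval, ← hχ, pow_orderOf_eq_one, one_apply hx.isUnit]
    rw [geom_sum_eq (mt (hker x).mp h), hd, sub_self, zero_div]

lemma sum_jacobiSum_pow_eq (hχ : orderOf χ = d) (hnd : n * d = Fintype.card F - 1) :
    ∑ p ∈ range d ×ˢ range d, jacobiSum (χ ^ p.1) (χ ^ p.2) =
      d ^ 2 * #{x : F | x ^ n = 1 ∧ (1 - x) ^ n = 1} := by
  calc ∑ p ∈ range d ×ˢ range d, jacobiSum (χ ^ p.1) (χ ^ p.2)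
      = ∑ x : F, (∑ j ∈ range d, (χ ^ j) x) * ∑ k ∈ range d, (χ ^ k) (1 - x) := by
        simp only [jacobiSum]
        rw [sum_comm]
        simp only [sum_product, sum_mul_sum]
    _ = ∑ x : F, if x ^ n = 1 ∧ (1 - x) ^ n = 1 then (d : ℂ) ^ 2 else 0 := by
        refine sum_congr rfl fun x _ => ?_
        rw [sum_range_pow_apply hχ hnd, sum_range_pow_apply hχ hnd]
        split_ifs <;> simp_all [sq]
    _ = d ^ 2 * #{x : F | x ^ n = 1 ∧ (1 - x) ^ n = 1} := by
        rw [← sum_filter, sum_const, nsmul_eq_mul, mul_comm]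

end MulChar

namespace FiniteField

variable {F : Type*} [Field F] [Fintype F] {n d : ℕ}

theorem exists_pow_eq_one_and_one_sub_pow_eq_one (hnd : n * d = Fintype.card F - 1)
    (hF : ((d : ℝ) ^ 2 - 1) * √(Fintype.card F) < Fintype.card F - 2) :
    ∃ x : F, x ^ n = 1 ∧ (1 - x) ^ n = 1 := by
  classical
  obtain ⟨χ, hχ⟩ := MulChar.exists_orderOf_eq hnd
  have hd : 0 < d := by
    rcases Nat.eq_zero_or_pos d with rfl | hd
    · have := Fintype.one_lt_card (α := F); omega
    · exact hd
  have hbound := MulChar.norm_sum_jacobiSum_pow_sub_le hχ hd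
  rw [MulChar.sum_jacobiSum_pow_eq hχ hnd] at hbound
  by_contra! h
  have hempty : #{x : F | x ^ n = 1 ∧ (1 - x) ^ n = 1} = 0 :=
    card_eq_zero.mpr (filter_eq_empty_iff.mpr fun x _ hx => h x hx.1 hx.2)
  rw [hempty, Nat.cast_zero, mul_zero, zero_sub, norm_neg,
    show ((Fintype.card F : ℂ) - 2) = ((Fintype.card F - 2 : ℝ) : ℂ) by push_cast; ring,
    Complex.norm_real, Real.norm_eq_abs] at hbound
  exact absurd (hbound.trans_lt hF) (not_lt.mpr (le_abs_self _))

end FiniteField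

lemma sq_sub_one_mul_sqrt_pow_lt {q : ℝ} {t : ℕ} (hq : 2 ≤ q) (ht : 4 ≤ t) :
    ((q - 1) ^ 2 - 1) * √(q ^ t) < q ^ t - 2 := by
  have hsq : √(q ^ t) * √(q ^ t) = q ^ t := Real.mul_self_sqrt (by positivity)
  have hge : q ^ 2 ≤ √(q ^ t) := by
    rw [Real.le_sqrt (by positivity) (by positivity), ← pow_mul]
    exact pow_le_pow_right₀ (by linarith) ht
  nlinarith

theorem stmt_9 (s t : ℕ) (hs : 1 ≤ s) (ht : 4 ≤ t) (q n : ℕ)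
    (hq : q = 2 ^ s) (hn : n = (q ^ t - 1) / (q - 1)) :
    ∃ α : AlgebraicClosure (ZMod 2), α ^ n = 1 ∧ (α + 1) ^ n = 1 := by
  have hq2 : 2 ≤ q := hq ▸ Nat.le_self_pow (by omega) 2
  have hnd : n * (q - 1) = q ^ t - 1 := by
    rw [hn, Nat.div_mul_cancel (by simpa using Nat.sub_dvd_pow_sub_pow q 1 t)]
  let K := GaloisField 2 (s * t)
  let : Fintype K := Fintype.ofFinite K
  have hcard : Fintype.card K = q ^ t := by
    rw [← Nat.card_eq_fintype_card, GaloisField.card 2 (s * t) (by positivity), hq, ← pow_mul]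
  have hbound := sq_sub_one_mul_sqrt_pow_lt (q := (q : ℝ)) (by exact_mod_cast hq2) ht
  obtain ⟨x, hx, hx'⟩ := FiniteField.exists_pow_eq_one_and_one_sub_pow_eq_one (F := K)
    (d := q - 1) (hcard ▸ hnd) (by
      rwa [hcard, Nat.cast_sub (by omega), Nat.cast_pow, Nat.cast_one])
  let φ : K →ₐ[ZMod 2] AlgebraicClosure (ZMod 2) := IsAlgClosed.lift
  refine ⟨φ x, by rw [← map_pow, hx, map_one], ?_⟩
  rw [← map_one φ, ← map_add, add_comm, ← CharTwo.sub_eq_add, ← map_pow, hx', map_one]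
end

section
/- Let q = 2^s with s ≥ 1. There exists c in the algebraic closure of 𝔽_2 with c ≠ 0 such that x^2 + x + c divides x^{q+1} - 1 if and only if s is odd; moreover in that case necessarily c = 1. -/
open Polynomial

private abbrev K := AlgebraicClosure (ZMod 2)

private lemma aux3 (s : ℕ) : 3 ∣ 2 ^ s + 1 ↔ Odd s := by
  rw [← ZMod.natCast_eq_zero_iff]
  push_cast
  rw [show ((2 : ZMod 3)) = -1 by decide]
  rcases Nat.even_or_odd s with h | h
  · rw [h.neg_one_pow]
    simp [Nat.not_odd_iff_even.mpr h]
    decide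
  · rw [h.neg_one_pow]
    simp [h]

private lemma hchar : (2 : K) = 0 := by
  have : CharP K 2 := inferInstance
  exact_mod_cast (CharP.cast_eq_zero K 2)

private lemma factor (c r : K) (hr : r ^ 2 + r + c = 0) :
    (X ^ 2 + X + C c : K[X]) = (X - C r) * (X - C (r + 1)) := by
  have h2' : (2 : K[X]) = 0 := by
    rw [← map_ofNat (C : K →+* K[X]) 2, hchar, map_zero]
  have hr'' : (C r ^ 2 + C r + C c : K[X]) = 0 := by
    rw [← C_pow, ← C_add, ← C_add, hr, C_0]
  have hC1 : (C (r + 1) : K[X]) = C r + 1 := by rw [C_add, C_1]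
  rw [hC1]
  linear_combination hr'' + (X * C r + X - C r ^ 2 - C r) * h2'

private lemma div_iff (c r : K) (hr : r ^ 2 + r + c = 0) (n : ℕ) :
    (X ^ 2 + X + C c : K[X]) ∣ X ^ n - 1 ↔ r ^ n = 1 ∧ (r + 1) ^ n = 1 := by
  have hfac := factor c r hr
  have hne : r ≠ r + 1 := by
    intro h
    have : (1 : K) = 0 := by linear_combination -h
    simp at this
  constructor
  · intro h
    rw [hfac] at h
    have h1 : (X - C r : K[X]) ∣ X ^ n - 1 := (dvd_mul_right _ _).trans h
    have h2 : (X - C (r + 1) : K[X]) ∣ X ^ n - 1 := (dvd_mul_left _ _).trans h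
    rw [dvd_iff_isRoot] at h1 h2
    simp only [IsRoot, eval_sub, eval_pow, eval_X, eval_one, sub_eq_zero] at h1 h2
    exact ⟨h1, h2⟩
  · rintro ⟨h1, h2⟩
    rw [hfac]
    have cop : IsCoprime (X - C r : K[X]) (X - C (r + 1)) :=
      isCoprime_X_sub_C_of_isUnit_sub (by
        simpa using (sub_ne_zero_of_ne hne).isUnit)
    refine cop.mul_dvd ?_ ?_
    · rw [dvd_iff_isRoot]
      simp [IsRoot, sub_eq_zero, h1]
    · rw [dvd_iff_isRoot]
      simp [IsRoot, sub_eq_zero, h2]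

private lemma exists_root (c : K) : ∃ r : K, r ^ 2 + r + c = 0 := by
  obtain ⟨r, hr⟩ := IsAlgClosed.exists_root (X ^ 2 + X + C c : K[X]) (by
    have : (X ^ 2 + X + C c : K[X]).degree = 2 := by compute_degree!
    rw [this]; norm_num)
  refine ⟨r, ?_⟩
  simpa [IsRoot] using hr

private lemma forward (s q : ℕ) (hq : q = 2 ^ s) (c : K) (hc : c ≠ 0)
    (h : (X ^ 2 + X + C c : K[X]) ∣ X ^ (q + 1) - 1) : c = 1 ∧ Odd s := by
  obtain ⟨r, hr⟩ := exists_root c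
  obtain ⟨h1, h2⟩ := (div_iff c r hr (q + 1)).mp h
  have hfrob : (r + 1) ^ q = r ^ q + 1 := by
    subst hq
    rw [add_pow_char_pow, one_pow]
  have e1 : r ^ q * r = 1 := by rw [← pow_succ]; exact h1
  have e2 : (r ^ q + 1) * (r + 1) = 1 := by rw [← hfrob, ← pow_succ]; exact h2
  have h2K : (2 : K) = 0 := hchar
  have hc1 : c = 1 := by linear_combination -hr + r * e2 - (r + 1) * e1 - h2K + c * h2K
  have hsum : r ^ 2 + r = 1 := by linear_combination -hr + hc1 + (r + r ^ 2) * h2K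
  have hr3 : r ^ 3 = 1 := by linear_combination (r - 1) * hsum + (r - 1) * h2K
  have hrne1 : r ≠ 1 := by
    intro h
    rw [h] at hsum
    have : (1 : K) = 0 := by linear_combination hsum
    simp at this
  have ho : orderOf r ∣ 3 := orderOf_dvd_of_pow_eq_one hr3
  have ho3 : orderOf r = 3 := by
    rcases (Nat.prime_three).eq_one_or_self_of_dvd _ ho with h | h
    · exact absurd (orderOf_eq_one_iff.mp h) hrne1
    · exact h
  have hdvd : 3 ∣ q + 1 := ho3 ▸ orderOf_dvd_of_pow_eq_one h1
  refine ⟨hc1, (aux3 s).mp ?_⟩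
  rwa [← hq]

private lemma backward (s q : ℕ) (hq : q = 2 ^ s) (hodd : Odd s) :
    (X ^ 2 + X + C (1 : K) : K[X]) ∣ X ^ (q + 1) - 1 := by
  obtain ⟨r, hr⟩ := exists_root (1 : K)
  have h2K : (2 : K) = 0 := hchar
  have hsum : r ^ 2 + r = 1 := by linear_combination -hr + (r ^ 2 + r) * h2K
  have hr3 : r ^ 3 = 1 := by linear_combination (r - 1) * hsum + (r - 1) * h2K
  obtain ⟨k, hk⟩ := (aux3 s).mpr hodd
  have hk' : q + 1 = 3 * k := by rw [hq]; exact hk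
  have h1 : r ^ (q + 1) = 1 := by rw [hk', pow_mul, hr3, one_pow]
  have hr2 : r + 1 = r ^ 2 := by linear_combination -hsum + r * h2K
  have h2 : (r + 1) ^ (q + 1) = 1 := by
    rw [hr2, ← pow_mul, mul_comm, pow_mul, h1, one_pow]
  exact (div_iff 1 r hr (q + 1)).mpr ⟨h1, h2⟩

theorem stmt_10 (s : ℕ) (hs : 1 ≤ s) (q : ℕ) (hq : q = 2 ^ s) :
    ((∃ c : AlgebraicClosure (ZMod 2), c ≠ 0 ∧
        (X ^ 2 + X + C c : Polynomial (AlgebraicClosure (ZMod 2))) ∣ X ^ (q + 1) - 1) ↔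
      Odd s) ∧
    ∀ c : AlgebraicClosure (ZMod 2), c ≠ 0 →
      (X ^ 2 + X + C c : Polynomial (AlgebraicClosure (ZMod 2))) ∣ X ^ (q + 1) - 1 → c = 1 := by
  constructor
  · constructor
    · rintro ⟨c, hc, hd⟩
      exact (forward s q hq c hc hd).2
    · intro hodd
      exact ⟨1, one_ne_zero, backward s q hq hodd⟩
  · intro c hc hd
    exact (forward s q hq c hc hd).1
end

section
/- Let p be prime and a, b, c positive integers with gcd(a, c) = 1. Then (p^{ab} - 1)/(p^b - 1) divides (p^{abc} - 1)/(p^{bc} - 1). -/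
lemma gcd_pow_sub_one_aux (n : ℕ) (hn : 1 ≤ n) :
    ∀ a c : ℕ, Nat.gcd (n ^ a - 1) (n ^ c - 1) = n ^ Nat.gcd a c - 1 := by
  intro a c
  induction a, c using Nat.gcd.induction with
  | H0 c => simp
  | H1 m c hm ih =>
    have hdvd : n ^ m - 1 ∣ n ^ (m * (c / m)) - 1 := by
      rw [pow_mul]
      simpa using Nat.sub_dvd_pow_sub_pow (n ^ m) 1 (c / m)
    obtain ⟨t, ht⟩ := hdvd
    have hc : n ^ c - 1 = (n ^ (c % m) - 1) + (n ^ m - 1) * (t * n ^ (c % m)) := by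
      have h1 : (n ^ m - 1) * t * n ^ (c % m) = n ^ c - n ^ (c % m) := by
        rw [← ht, Nat.sub_mul, one_mul, ← pow_add]
        rw [Nat.div_add_mod]
      have h2 : 1 ≤ n ^ (c % m) := Nat.one_le_pow _ _ hn
      have h3 : n ^ (c % m) ≤ n ^ c := Nat.pow_le_pow_right hn (Nat.mod_le c m)
      have h4 : (n ^ m - 1) * (t * n ^ (c % m)) = n ^ c - n ^ (c % m) := by
        rw [← h1]; ring
      omega
    rw [hc, Nat.gcd_add_mul_left_right, Nat.gcd_comm, ih, ← Nat.gcd_rec]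

theorem stmt_12 (p a b c : ℕ) (hp : p.Prime) (ha : 0 < a) (hb : 0 < b) (hc : 0 < c)
    (hac : Nat.Coprime a c) :
    (p ^ (a * b) - 1) / (p ^ b - 1) ∣ (p ^ (a * b * c) - 1) / (p ^ (b * c) - 1) := by
  set q := p ^ b with hq
  have hq2 : 2 ≤ q := Nat.one_lt_pow hb.ne' hp.one_lt
  have hqab : p ^ (a * b) = q ^ a := by rw [hq, ← pow_mul, mul_comm]
  have hqbc : p ^ (b * c) = q ^ c := by rw [hq, ← pow_mul]
  have hqabc : p ^ (a * b * c) = q ^ (a * c) := by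
    rw [hq, ← pow_mul]; ring_nf
  rw [hqab, hqbc, hqabc]
  set A := q ^ a - 1 with hA
  set C := q ^ c - 1 with hC
  set N := q ^ (a * c) - 1 with hN
  set D := q - 1 with hD
  have hgcd : Nat.gcd A C = D := by
    rw [hA, hC, gcd_pow_sub_one_aux q (by omega), hac, pow_one]
  have hDpos : 0 < D := by omega
  have hcop : Nat.Coprime (A / D) (C / D) := by
    rw [← hgcd]
    exact Nat.coprime_div_gcd_div_gcd (hgcd ▸ hDpos)
  have hAN : A ∣ N := by
    rw [hA, hN, pow_mul]
    simpa using Nat.sub_dvd_pow_sub_pow (q ^ a) 1 c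
  have hCN : C ∣ N := by
    rw [hC, hN, mul_comm a c, pow_mul]
    simpa using Nat.sub_dvd_pow_sub_pow (q ^ c) 1 a
  have hDA : D ∣ A := by
    rw [hA, hD]
    simpa using Nat.sub_dvd_pow_sub_pow q 1 a
  have hDC : D ∣ C := by
    rw [hC, hD]
    simpa using Nat.sub_dvd_pow_sub_pow q 1 c
  have hCpos : 0 < C := by
    have : q ≤ q ^ c := Nat.le_self_pow hc.ne' q
    omega
  obtain ⟨k, hk⟩ := hAN
  obtain ⟨d, hd⟩ := hDA
  have hNDk : N / D = A / D * k := by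
    rw [hk, hd, Nat.mul_div_cancel_left _ hDpos, mul_assoc, Nat.mul_div_cancel_left _ hDpos]
  obtain ⟨m2, hm2⟩ := hCN
  obtain ⟨d2, hd2⟩ := hDC
  have hND : N / D = N / C * (C / D) := by
    have h1 : N / D = d2 * m2 := by rw [hm2, hd2, mul_assoc, Nat.mul_div_cancel_left _ hDpos]
    have h2 : N / C = m2 := by rw [hm2, Nat.mul_div_cancel_left _ hCpos]
    have h3 : C / D = d2 := by rw [hd2, Nat.mul_div_cancel_left _ hDpos]
    rw [h1, h2, h3, mul_comm]
  have : A / D ∣ N / C * (C / D) := by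
    rw [← hND, hNDk]; exact Dvd.intro k rfl
  exact hcop.dvd_of_dvd_mul_right this
end

section
/- For a ≥ 0, gcd((2^{2^{a+2}} - 1)/(2^{2^a} - 1), (2^{2^{a+3}} - 1)/(2^{2^{a+1}} - 1)) = (2^{2^{a+2}} - 1)/(2^{2^{a+1}} - 1). -/
theorem stmt_14 (a : ℕ) :
    Nat.gcd ((2 ^ 2 ^ (a + 2) - 1) / (2 ^ 2 ^ a - 1))
        ((2 ^ 2 ^ (a + 3) - 1) / (2 ^ 2 ^ (a + 1) - 1)) =
      (2 ^ 2 ^ (a + 2) - 1) / (2 ^ 2 ^ (a + 1) - 1) := by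
  set x := 2 ^ 2 ^ a with hxdef
  have hx : 2 ≤ x := by
    have h1 : 1 ≤ 2 ^ a := Nat.one_le_two_pow
    calc (2:ℕ) = 2 ^ 1 := rfl
      _ ≤ x := Nat.pow_le_pow_right (by norm_num) h1
  have heven : 2 ∣ x := dvd_pow_self 2 (by positivity : 2 ^ a ≠ 0)
  obtain ⟨y, hy⟩ : ∃ y, x = y + 2 := ⟨x - 2, by omega⟩
  have h1 : 2 ^ 2 ^ (a + 1) = x ^ 2 := by
    rw [hxdef, ← pow_mul, pow_succ]
  have h2 : 2 ^ 2 ^ (a + 2) = x ^ 4 := by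
    rw [hxdef, ← pow_mul, show 2 ^ (a + 2) = 2 ^ a * 4 from by rw [pow_add]; ring]
  have h3 : 2 ^ 2 ^ (a + 3) = x ^ 8 := by
    rw [hxdef, ← pow_mul, show 2 ^ (a + 3) = 2 ^ a * 8 from by rw [pow_add]; ring]
  have hx2 : 4 ≤ x ^ 2 := by
    calc (4:ℕ) = 2 ^ 2 := rfl
      _ ≤ x ^ 2 := Nat.pow_le_pow_left hx 2
  have e1 : (x ^ 4 - 1) / (x - 1) = (x + 1) * (x ^ 2 + 1) := by
    have key : x ^ 4 = (x + 1) * (x ^ 2 + 1) * (x - 1) + 1 := by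
      rw [show x - 1 = y + 1 from by omega, hy]; ring
    exact Nat.div_eq_of_eq_mul_left (by omega) (Nat.sub_eq_of_eq_add key)
  have e2 : (x ^ 8 - 1) / (x ^ 2 - 1) = (x ^ 2 + 1) * (x ^ 4 + 1) := by
    obtain ⟨z, hz⟩ : ∃ z, x ^ 2 = z + 1 := ⟨x ^ 2 - 1, by omega⟩
    have key : x ^ 8 = (x ^ 2 + 1) * (x ^ 4 + 1) * (x ^ 2 - 1) + 1 := by
      rw [show x ^ 8 = (x ^ 2) ^ 4 from by ring, show x ^ 4 = (x ^ 2) ^ 2 from by ring,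
        show x ^ 2 - 1 = z from by omega, hz]; ring
    exact Nat.div_eq_of_eq_mul_left (by omega) (Nat.sub_eq_of_eq_add key)
  have e3 : (x ^ 4 - 1) / (x ^ 2 - 1) = x ^ 2 + 1 := by
    obtain ⟨z, hz⟩ : ∃ z, x ^ 2 = z + 1 := ⟨x ^ 2 - 1, by omega⟩
    have key : x ^ 4 = (x ^ 2 + 1) * (x ^ 2 - 1) + 1 := by
      rw [show x ^ 4 = (x ^ 2) ^ 2 from by ring, show x ^ 2 - 1 = z from by omega, hz]; ring
    exact Nat.div_eq_of_eq_mul_left (by omega) (Nat.sub_eq_of_eq_add key)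
  rw [h1, h2, h3, e1, e2, e3, mul_comm (x + 1)]
  rw [Nat.gcd_mul_left]
  have hcop : Nat.gcd (x + 1) (x ^ 4 + 1) = 1 := by
    set d := Nat.gcd (x + 1) (x ^ 4 + 1) with hd
    have hd1 : d ∣ x + 1 := Nat.gcd_dvd_left _ _
    have hd2 : d ∣ x ^ 4 + 1 := Nat.gcd_dvd_right _ _
    have hd3 : d ∣ x ^ 4 - 1 := by
      have : x ^ 4 - 1 = (x + 1) * ((x - 1) * (x ^ 2 + 1)) := by
        have key : x ^ 4 = (x + 1) * ((x - 1) * (x ^ 2 + 1)) + 1 := by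
          rw [show x - 1 = y + 1 from by omega, hy]; ring
        omega
      rw [this]; exact Dvd.dvd.mul_right hd1 _
    have hdvd2 : d ∣ 2 := by
      have h4 : 1 ≤ x ^ 4 := Nat.one_le_pow _ _ (by omega)
      have : (x ^ 4 + 1) - (x ^ 4 - 1) = 2 := by omega
      calc d ∣ (x ^ 4 + 1) - (x ^ 4 - 1) := Nat.dvd_sub hd2 hd3
        _ = 2 := this
    rcases (Nat.dvd_prime Nat.prime_two).mp hdvd2 with h | h
    · exact h
    · exfalso
      have : (2:ℕ) ∣ 1 := by
        have : x + 1 - x = 1 := by omega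
        calc (2:ℕ) ∣ x + 1 - x := Nat.dvd_sub (h ▸ hd1) heven
          _ = 1 := this
      omega
  rw [hcop, mul_one]
end

section
/- Let p be a prime, n a positive integer coprime to p, and c an indeterminate. Write x^n - 1 = r_{p-1}(c) x^{p-1} + … + r_1(c) x + r_0(c) + Q(x,c)(x^p - x - c) in 𝔽_p[x,c]. Then the greatest common divisor g(c) of r_0(c), …, r_{p-1}(c) in 𝔽_p[c] has no multiple roots (i.e., g is squarefree). -/
open Polynomial

/-!
Write `x ^ n - 1 = R + (x ^ p - x - c) Q` in `𝔽_p[c][x]`, and suppose `d ^ 2` divides every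
coefficient `r_i` of `R`. Substituting `c := x ^ p - x` kills the divisor, so
`d(x ^ p - x) ^ 2` divides `x ^ n - 1` over `𝔽̄_p`. As `p ∤ n`, `x ^ n - 1` is separable, hence
`d(x ^ p - x)` is a unit; since `x ^ p - x` has positive degree, `d` is a unit too.
-/

namespace Polynomial

theorem dvd_eval₂_of_forall_dvd_coeff {A B : Type*} [Semiring A] [CommSemiring B] (ψ : A →+* B)
    (y : B) {b : B} {F : A[X]} (h : ∀ i, b ∣ ψ (F.coeff i)) : b ∣ F.eval₂ ψ y := by
  rw [eval₂_eq_sum_range]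
  exact Finset.dvd_sum fun i _ => dvd_mul_of_dvd_left (h i) _

theorem isUnit_of_isUnit_comp {R : Type*} [CommSemiring R] [NoZeroDivisors R] {d q : R[X]}
    (hq : q.natDegree ≠ 0) (h : IsUnit (d.comp q)) : IsUnit d := by
  have hd : d.natDegree = 0 := by
    simpa [natDegree_comp, hq] using natDegree_eq_zero_of_isUnit h
  rwa [eq_C_of_natDegree_eq_zero hd, C_comp, ← eq_C_of_natDegree_eq_zero hd] at h

section ArtinSchreier

variable {R : Type*} [CommRing R] {p : ℕ}

theorem X_pow_sub_X_sub_C_eq (a : R) : (X ^ p - X - C a : R[X]) = X ^ p - (X + C a) := by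
  ring

theorem monic_X_pow_sub_X_sub_C [Nontrivial R] (hp : 1 < p) (a : R) :
    (X ^ p - X - C a : R[X]).Monic := by
  rw [X_pow_sub_X_sub_C_eq]
  exact (monic_X_pow p).sub_of_left (by rw [degree_X_pow, degree_X_add_C]; exact_mod_cast hp)

theorem natDegree_X_pow_sub_X_sub_C [Nontrivial R] (hp : 1 < p) (a : R) :
    (X ^ p - X - C a : R[X]).natDegree = p := by
  rw [X_pow_sub_X_sub_C_eq, natDegree_sub_eq_left_of_natDegree_lt] <;>
    rw [natDegree_X_pow]
  rwa [natDegree_X_add_C]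

end ArtinSchreier

end Polynomial

section Substitution

variable {k L : Type*} [CommRing k] [CommRing L] (p : ℕ) (φ : k →+* L)

/-- Substitutes `c := X ^ p - X` in `F ∈ k[c][X]`, mapping the coefficients along `φ`. -/
noncomputable def artinSchreierSubst : k[X][X] →+* L[X] :=
  eval₂RingHom ((compRingHom (X ^ p - X)).comp (mapRingHom φ)) X

theorem artinSchreierSubst_X_pow_sub_X_sub_C :
    artinSchreierSubst p φ (X ^ p - X - C X) = 0 := by
  simp [artinSchreierSubst]

theorem artinSchreierSubst_modByMonic (F : k[X][X]) :
    artinSchreierSubst p φ (F %ₘ (X ^ p - X - C X)) = artinSchreierSubst p φ F := by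
  conv_rhs => rw [← modByMonic_add_div F (X ^ p - X - C X)]
  rw [map_add, map_mul, artinSchreierSubst_X_pow_sub_X_sub_C, zero_mul, add_zero]

theorem artinSchreierSubst_X_pow_sub_one (n : ℕ) :
    artinSchreierSubst p φ (X ^ n - 1) = X ^ n - 1 := by
  simp [artinSchreierSubst]

end Substitution

theorem isUnit_of_mul_self_dvd_coeff_modByMonic {k L : Type*} [CommRing k] [Field L]
    (φ : k →+* L) {p : ℕ} (hp : 1 < p) {F : k[X][X]}
    (hF : Squarefree (artinSchreierSubst p φ F)) {d : L[X]}
    (hd : ∀ i < p, d * d ∣ ((F %ₘ (X ^ p - X - C X)).coeff i).map φ) : IsUnit d := by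
  have := φ.domain_nontrivial
  refine isUnit_of_isUnit_comp
    ((FiniteField.X_pow_card_sub_X_natDegree_eq L hp).trans_ne (by omega)) (hF _ ?_)
  rw [← artinSchreierSubst_modByMonic, ← mul_comp]
  refine dvd_eval₂_of_forall_dvd_coeff _ _ fun i => ?_
  rcases lt_or_ge i p with hi | hi
  · exact map_dvd (compRingHom _) (hd i hi)
  · rw [coeff_eq_zero_of_natDegree_lt, map_zero]
    · exact dvd_zero _
    · have hdeg := natDegree_X_pow_sub_X_sub_C hp (X : k[X])
      have hne : (X ^ p - X - C X : k[X][X]) ≠ 1 :=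
        ne_of_apply_ne natDegree (by rw [hdeg, natDegree_one]; omega)
      have := natDegree_modByMonic_lt F (monic_X_pow_sub_X_sub_C hp _) hne
      omega

theorem stmt_15_general (p : ℕ) [Fact p.Prime] (n : ℕ) (hcop : Nat.Coprime n p)
    (r : Fin p → Polynomial (ZMod p))
    (hr : ∀ i : Fin p, r i =
      ((X ^ n - 1 : Polynomial (Polynomial (ZMod p))) %ₘ
        (X ^ p - X - C Polynomial.X)).coeff i)
    (g : Polynomial (ZMod p))
    (hg : g = Finset.univ.gcd r) :
    Squarefree (g.map (algebraMap (ZMod p) (AlgebraicClosure (ZMod p)))) := by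
  have hp : p.Prime := Fact.out
  have hn : (n : AlgebraicClosure (ZMod p)) ≠ 0 := by
    rw [Ne, CharP.cast_eq_zero_iff _ p]
    exact (Nat.Prime.coprime_iff_not_dvd hp).mp hcop.symm
  have hsq : Squarefree (artinSchreierSubst p (algebraMap (ZMod p) (AlgebraicClosure (ZMod p)))
      (X ^ n - 1)) := by
    rw [artinSchreierSubst_X_pow_sub_one]
    exact (X_pow_sub_one_separable_iff.mpr hn).squarefree
  intro d hd
  refine isUnit_of_mul_self_dvd_coeff_modByMonic _ hp.one_lt hsq fun i hi => ?_
  rw [← hr ⟨i, hi⟩]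
  exact hd.trans (map_dvd (mapRingHom _) (hg ▸ Finset.gcd_dvd (Finset.mem_univ _)))

theorem stmt_15 (p : ℕ) [Fact p.Prime] (n : ℕ) (hn : 0 < n) (hcop : Nat.Coprime n p)
    (r : Fin p → Polynomial (ZMod p))
    (hr : ∀ i : Fin p, r i =
      ((X ^ n - 1 : Polynomial (Polynomial (ZMod p))) %ₘ
        (X ^ p - X - C Polynomial.X)).coeff i)
    (g : Polynomial (ZMod p))
    (hg : g = Finset.univ.gcd r) :
    Squarefree (g.map (algebraMap (ZMod p) (AlgebraicClosure (ZMod p)))) :=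
  stmt_15_general p n hcop r hr g hg
end

section
/- Let p be prime, n coprime to p, and let g(c) ∈ 𝔽_p[c] be the gcd of the coefficients r_0(c), …, r_{p-1}(c) of the remainder of x^n - 1 upon division by x^p - x - c. Then g(x^p - x) equals the greatest common divisor of the p polynomials (x + λ)^n - 1 for λ ∈ 𝔽_p; in particular the degree of that gcd is p times the degree of g. -/
/-!
Write `y = X ^ q - X` (with `q = p`). Substituting `c := y`, `X := X + λ` into the division
identity `f = R + (X ^ q - X - c) * Q` kills the divisor, because `y` is invariant under
`X ↦ X + λ`; hence `f (X + λ) = ∑ i, R_i(y) * (X + λ) ^ i` for every `λ ∈ 𝔽_q`. The matrix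
`((X + λ) ^ i)` is a Vandermonde matrix whose determinant is a nonzero constant, so the
`f (X + λ)` and the `R_i(y)` generate the same ideal of `𝔽_q[X]`. Finally `g(y)` divides every
`R_i(y)` and, by Bézout, lies in the ideal they generate.
-/

open Polynomial Matrix

theorem dvd_of_mem_span_range {R ι : Type*} [CommSemiring R] {a x : R} {v : ι → R}
    (ha : ∀ i, a ∣ v i) (hx : x ∈ Ideal.span (Set.range v)) : a ∣ x := by
  refine Ideal.mem_span_singleton.mp (Ideal.span_le.mpr ?_ hx)
  rintro _ ⟨i, rfl⟩
  exact Ideal.mem_span_singleton.mpr (ha i)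

theorem gcd_univ_mem_span_range {R ι : Type*} [CommRing R] [IsDomain R] [NormalizedGCDMonoid R]
    [IsPrincipalIdealRing R] [Fintype ι] (v : ι → R) :
    Finset.univ.gcd v ∈ Ideal.span (Set.range v) := by
  obtain ⟨d, hd⟩ := (IsPrincipalIdealRing.principal (Ideal.span (Set.range v))).principal
  have hdv : ∀ i, d ∣ v i := by
    intro i
    have hi : v i ∈ Ideal.span (Set.range v) := Ideal.subset_span (Set.mem_range_self i)
    rw [hd] at hi
    exact Ideal.mem_span_singleton.mp hi
  rw [hd]
  exact Ideal.mem_span_singleton.mpr (Finset.dvd_gcd fun i _ => hdv i)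

theorem mem_span_range_of_mulVec_eq {R n : Type*} [CommRing R] [Fintype n] [DecidableEq n]
    {M : Matrix n n R} (hM : IsUnit M.det) {w u : n → R} (h : M *ᵥ w = u) (i : n) :
    w i ∈ Ideal.span (Set.range u) := by
  have hw : w = M⁻¹ *ᵥ u := by
    rw [← h, Matrix.mulVec_mulVec, Matrix.nonsing_inv_mul _ hM, Matrix.one_mulVec]
  rw [hw, Ideal.mem_span_range_iff_exists_fun]
  exact ⟨M⁻¹ i, rfl⟩

namespace Polynomial

variable {R : Type*} [CommRing R]

theorem comp_eq_eval₂_modByMonic {f b s : R[X]} (hs : b.comp s = b) :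
    f.comp s = eval₂ (compRingHom b) s (f.map C %ₘ (b.map C - C X)) := by
  have hC : (compRingHom b).comp C = C := by ext; simp
  have hψ : ∀ h : R[X], eval₂ (compRingHom b) s (h.map C) = h.comp s := by
    intro h; rw [eval₂_map, hC]; rfl
  have hdiv : eval₂ (compRingHom b) s (b.map C - C X) = 0 := by
    rw [eval₂_sub, hψ, hs, eval₂_C, coe_compRingHom_apply, X_comp, sub_self]
  conv_lhs => rw [← hψ, ← modByMonic_add_div (f.map C) (b.map C - C X)]
  rw [eval₂_add, eval₂_mul, hdiv, zero_mul, add_zero]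

theorem comp_eq_sum_coeff_modByMonic_comp {f b s : R[X]} {d : ℕ} (hb : b.Monic)
    (hbd : b.natDegree = d) (hd : 0 < d) (hs : b.comp s = b) :
    f.comp s = ∑ i : Fin d, ((f.map C %ₘ (b.map C - C X)).coeff i).comp b * s ^ (i : ℕ) := by
  have hbC : (b.map C).degree = d := by
    rw [degree_map_eq_of_injective C_injective, (degree_eq_iff_natDegree_eq_of_pos hd).mpr hbd]
  have hlt : (C X : R[X][X]).degree < (b.map C).degree :=
    degree_C_le.trans_lt (by rw [hbC]; exact_mod_cast hd)
  have hmon : (b.map C - C X).Monic := (hb.map C).sub_of_left hlt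
  have hdeg : (b.map C - C X).natDegree = d := by
    rw [natDegree_eq_of_degree_eq (degree_sub_eq_left_of_degree_lt hlt),
      natDegree_map_eq_of_injective C_injective, hbd]
  have hrem : (f.map C %ₘ (b.map C - C X)).natDegree < d :=
    hdeg ▸ natDegree_modByMonic_lt _ hmon fun h => by simp [h] at hdeg; omega
  rw [comp_eq_eval₂_modByMonic hs, eval₂_eq_sum_range' _ hrem, ← Fin.sum_univ_eq_sum_range]
  rfl

theorem isUnit_det_vandermonde_X_add_C {K : Type*} [Field K] {d : ℕ} {a : Fin d → K}
    (ha : Function.Injective a) : IsUnit (vandermonde fun k => X + C (a k)).det := by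
  have hmap : (vandermonde fun k => C (a k)) = (C : K →+* K[X]).mapMatrix (vandermonde a) := by
    ext; simp [vandermonde_apply]
  simp_rw [add_comm X]
  rw [det_vandermonde_add (fun k => C (a k)) X, hmap, ← RingHom.map_det, isUnit_C,
    isUnit_iff_ne_zero]
  exact det_vandermonde_ne_zero_iff.mpr ha

theorem normalize_comp_of_normalize_eq {K : Type*} [Field K] [DecidableEq K] {g y : K[X]}
    (hg : normalize g = g) (hy : y.Monic) (hy0 : y.natDegree ≠ 0) :
    normalize (g.comp y) = g.comp y := by
  rcases eq_or_ne g 0 with rfl | hg0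
  · simp
  · exact ((hg ▸ monic_normalize hg0 : g.Monic).comp hy hy0).normalize_eq_self

end Polynomial

namespace FiniteField

variable {K : Type*} [Field K] [Fintype K]

theorem X_pow_card_sub_X_comp_X_add_C (a : K) :
    (X ^ Fintype.card K - X : K[X]).comp (X + C a) = X ^ Fintype.card K - X := by
  rw [sub_comp, X_pow_comp, X_comp, ← expand_card, map_add, expand_X, expand_C]
  ring

theorem gcd_coeff_modByMonic_comp_eq_gcd_comp [DecidableEq K] {q : ℕ} (hq : Fintype.card K = q)
    (f : K[X]) :
    (Finset.univ.gcd fun i : Fin q => (f.map C %ₘ (X ^ q - X - C X)).coeff i).comp (X ^ q - X) =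
      Finset.univ.gcd fun a : K => f.comp (X + C a) := by
  set y : K[X] := X ^ q - X
  have hdiv : (X ^ q - X - C X : K[X][X]) = y.map C - C X := by simp [y]
  rw [hdiv]
  set g := Finset.univ.gcd fun i : Fin q => (f.map C %ₘ (y.map C - C X)).coeff i
  set D := Finset.univ.gcd fun a : K => f.comp (X + C a)
  have hq1 : 1 < q := hq ▸ Fintype.one_lt_card
  have hy : y.Monic := monic_X_pow_sub (by rw [degree_X]; exact_mod_cast hq1)
  have hyd : y.natDegree = q := X_pow_card_sub_X_natDegree_eq K hq1
  have hys : ∀ a : K, y.comp (X + C a) = y := by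
    subst hq
    exact X_pow_card_sub_X_comp_X_add_C
  set w : Fin q → K[X] := fun i => ((f.map C %ₘ (y.map C - C X)).coeff i).comp y
  have hsum : ∀ a : K, f.comp (X + C a) = ∑ i : Fin q, w i * (X + C a) ^ (i : ℕ) := fun a =>
    comp_eq_sum_coeff_modByMonic_comp hy hyd (by omega) (hys a)
  have hw : ∀ i, w i ∈ Ideal.span (Set.range fun a : K => f.comp (X + C a)) := by
    let e : Fin q ≃ K := (Fintype.equivFinOfCardEq hq).symm
    have hM : vandermonde (fun k => X + C (e k)) *ᵥ w = fun k => f.comp (X + C (e k)) := by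
      funext k
      simp [mulVec, dotProduct, vandermonde_apply, hsum, mul_comm]
    exact fun i => Ideal.span_mono (Set.range_comp_subset_range e _)
      (mem_span_range_of_mulVec_eq (isUnit_det_vandermonde_X_add_C e.injective) hM i)
  have hgD : g.comp y ∣ D := by
    refine Finset.dvd_gcd fun a _ => ?_
    rw [hsum a]
    refine Finset.dvd_sum fun i _ => Dvd.dvd.mul_right ?_ _
    exact map_dvd (compRingHom y) (Finset.gcd_dvd (Finset.mem_univ i))
  have hDg : D ∣ g.comp y := by
    have hmem := Ideal.mem_map_of_mem (compRingHom y) (gcd_univ_mem_span_range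
      fun i : Fin q => (f.map C %ₘ (y.map C - C X)).coeff i)
    rw [Ideal.map_span, ← Set.range_comp] at hmem
    exact dvd_of_mem_span_range
      (fun i => dvd_of_mem_span_range (fun a => Finset.gcd_dvd (Finset.mem_univ a)) (hw i))
      (hmem : g.comp y ∈ Ideal.span (Set.range w))
  have hgn : normalize g = g := Finset.normalize_gcd
  rw [← normalize_comp_of_normalize_eq hgn hy (by omega), normalize_eq_normalize hgD hDg,
    Finset.normalize_gcd]

end FiniteField

theorem stmt_16_general (p : ℕ) [Fact p.Prime]
    (n : ℕ)
    (r : Fin p → Polynomial (ZMod p))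
    (hr : ∀ i : Fin p, r i =
      ((X ^ n - 1 : Polynomial (Polynomial (ZMod p))) %ₘ
        (X ^ p - X - C Polynomial.X)).coeff i)
    (g : Polynomial (ZMod p))
    (hg : g = Finset.univ.gcd r) :
    g.comp (X ^ p - X) =
        Finset.univ.gcd (fun lam : ZMod p => (X + C lam) ^ n - 1) ∧
      (Finset.univ.gcd (fun lam : ZMod p => (X + C lam) ^ n - 1)).natDegree =
        p * g.natDegree := by
  have hr' : r = fun i : Fin p =>
      ((X ^ n - 1 : (ZMod p)[X]).map C %ₘ (X ^ p - X - C X)).coeff i := by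
    funext i
    simp [hr]
  have hcomp : (fun lam : ZMod p => (X + C lam) ^ n - 1) =
      fun lam => (X ^ n - 1 : (ZMod p)[X]).comp (X + C lam) := by
    simp
  have hgcd : g.comp (X ^ p - X) = Finset.univ.gcd (fun lam : ZMod p => (X + C lam) ^ n - 1) := by
    rw [hg, hr', hcomp]
    exact FiniteField.gcd_coeff_modByMonic_comp_eq_gcd_comp (ZMod.card p) _
  refine ⟨hgcd, ?_⟩
  rw [← hgcd, natDegree_comp,
    FiniteField.X_pow_card_sub_X_natDegree_eq _ (Fact.out : p.Prime).one_lt, mul_comm]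

theorem stmt_16 (p : ℕ) [Fact p.Prime] (n : ℕ) (hn : 0 < n) (hcop : Nat.Coprime n p)
    (r : Fin p → Polynomial (ZMod p))
    (hr : ∀ i : Fin p, r i =
      ((X ^ n - 1 : Polynomial (Polynomial (ZMod p))) %ₘ
        (X ^ p - X - C Polynomial.X)).coeff i)
    (g : Polynomial (ZMod p))
    (hg : g = Finset.univ.gcd r) :
    g.comp (X ^ p - X) =
        Finset.univ.gcd (fun lam : ZMod p => (X + C lam) ^ n - 1) ∧
      (Finset.univ.gcd (fun lam : ZMod p => (X + C lam) ^ n - 1)).natDegree =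
        p * g.natDegree :=
  stmt_16_general p n r hr g hg
end

section
/- Let q = 2^s. The greatest common divisor of x^{q^2+q+1} - 1 and (x+1)^{q^2+q+1} - 1 in 𝔽_2[x] equals (x^{q+1} + x + 1)(x^{q+1} + x^q + 1) if s is odd, and (x^{q+1} + x + 1)(x^{q+1} + x^q + 1)/(x^2 + x + 1) if s is even. In particular the number of α in the algebraic closure of 𝔽_2 with α^{q^2+q+1} = (α+1)^{q^2+q+1} = 1 equals 2q + 1 - (-1)^s. -/
/-!
Write `N = q² + q + 1`, `F = X^(q+1) + X + 1` and `G = X^(q+1) + X^q + 1 = F(X + 1)`.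
Modulo `F` we have `X^(q+1) = X + 1`, so Frobenius gives `X^N = (X + 1)^q X = 1` and
`(X + 1)^N = X^((q+1)N) = 1`; substituting `X + 1` for `X` gives the same for `G`. Hence
`lcm F G` divides `d = gcd(X^N - 1, (X + 1)^N - 1)`. Conversely
`F G = X^(q+1) ((X + 1)^N - 1)` modulo `X^N - 1`, so every root of the separable polynomial `d`
is a root of `F` or of `G`, and `d = lcm F G = F G / gcd F G`. Finally
`(X + 1) F - X G = X² + X + 1`; it divides `F` and `G` when `q ≡ 1 (mod 3)` (`s` even) and is
coprime to `F` when `q ≡ 2 (mod 3)` (`s` odd). Counting the roots of `d` gives the cardinality.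
-/

open Polynomial

section CharTwo

variable {R : Type*} [CommRing R] [CharP R 2] {s q : ℕ}

theorem trinomial_dvd_pow_sub_one (hq : q = 2 ^ s) (a : R) :
    a ^ (q + 1) + a + 1 ∣ a ^ (q ^ 2 + q + 1) - 1 := by
  obtain ⟨f, hf⟩ : ∃ f, f = a ^ (q + 1) + a + 1 := ⟨_, rfl⟩
  have h2 : (2 : R) = 0 := CharTwo.two_eq_zero
  have hpow : (a ^ (q + 1)) ^ q = f ^ q + a ^ q + 1 := by
    rw [show a ^ (q + 1) = f + (a + 1) by linear_combination -hf - (a + 1) * h2, hq,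
      add_pow_char_pow, add_pow_char_pow, one_pow, add_assoc]
  have hq0 : q ≠ 0 := hq ▸ (Nat.two_pow_pos s).ne'
  rw [← hf]
  refine Dvd.intro (f ^ (q - 1) * a + 1) ?_
  calc f * (f ^ (q - 1) * a + 1) = f ^ q * a + f := by rw [← pow_sub_one_mul hq0]; ring
    _ = (a ^ (q + 1)) ^ q * a - 1 := by rw [hpow]; linear_combination hf + h2
    _ = a ^ (q ^ 2 + q + 1) - 1 := by ring

theorem trinomial_dvd_add_one_pow_sub_one (hq : q = 2 ^ s) (a : R) :
    a ^ (q + 1) + a + 1 ∣ (a + 1) ^ (q ^ 2 + q + 1) - 1 := by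
  have h2 : (2 : R) = 0 := CharTwo.two_eq_zero
  -- `a + 1 ≡ a ^ (q + 1)`, so `(a + 1) ^ N ≡ (a ^ N) ^ (q + 1) ≡ 1`
  have h1 : a ^ (q + 1) + a + 1 ∣ a ^ (q + 1) - (a + 1) :=
    ⟨1, by linear_combination -(a + 1) * h2⟩
  have := dvd_sub ((trinomial_dvd_pow_sub_one hq a).trans (sub_one_dvd_pow_sub_one _ (q + 1)))
    (h1.trans (sub_dvd_pow_sub_pow _ _ (q ^ 2 + q + 1)))
  convert this using 1
  ring

theorem add_one_trinomial (hq : q = 2 ^ s) (a : R) :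
    (a + 1) ^ (q + 1) + (a + 1) + 1 = a ^ (q + 1) + a ^ q + 1 := by
  have h2 : (2 : R) = 0 := CharTwo.two_eq_zero
  subst hq
  rw [pow_succ, add_pow_char_pow, one_pow]
  linear_combination (a + 1) * h2

theorem trinomial_mul_reciprocal_trinomial (hq : q = 2 ^ s) (a : R) :
    (a ^ (q + 1) + a + 1) * (a ^ (q + 1) + a ^ q + 1) =
      a ^ (q + 1) * ((a + 1) ^ (q ^ 2 + q + 1) - 1) -
        (a + 1) * (a ^ q + 1) * (a ^ (q ^ 2 + q + 1) - 1) := by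
  have h2 : (2 : R) = 0 := CharTwo.two_eq_zero
  have hN : ∀ b : R, b ^ (q ^ 2 + q + 1) = (b ^ q) ^ q * b ^ q * b := fun b => by ring
  rw [hN, hN, hq, add_pow_char_pow, one_pow, add_pow_char_pow, one_pow]
  linear_combination (a * a ^ 2 ^ s) * h2

theorem reciprocal_trinomial_dvd_pow_sub_one (hq : q = 2 ^ s) (a : R) :
    a ^ (q + 1) + a ^ q + 1 ∣ a ^ (q ^ 2 + q + 1) - 1 := by
  simpa only [add_one_trinomial hq, add_assoc, CharTwo.add_self_eq_zero, add_zero] using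
    trinomial_dvd_add_one_pow_sub_one hq (a + 1)

theorem reciprocal_trinomial_dvd_add_one_pow_sub_one (hq : q = 2 ^ s) (a : R) :
    a ^ (q + 1) + a ^ q + 1 ∣ (a + 1) ^ (q ^ 2 + q + 1) - 1 :=
  add_one_trinomial hq a ▸ trinomial_dvd_pow_sub_one hq (a + 1)

theorem trinomial_eq_zero_or_of_pow_eq_one [IsDomain R] (hq : q = 2 ^ s) {a : R}
    (ha : a ^ (q ^ 2 + q + 1) = 1) (ha' : (a + 1) ^ (q ^ 2 + q + 1) = 1) :
    a ^ (q + 1) + a + 1 = 0 ∨ a ^ (q + 1) + a ^ q + 1 = 0 := by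
  have h := trinomial_mul_reciprocal_trinomial hq a
  rw [ha, ha', sub_self, mul_zero, mul_zero, sub_zero] at h
  exact mul_eq_zero.mp h

end CharTwo

section CommRing

variable {R : Type*} [CommRing R] {q : ℕ}

theorem dvd_sq_add_add_one_of_dvd_trinomials {a c : R} (hF : c ∣ a ^ (q + 1) + a + 1)
    (hG : c ∣ a ^ (q + 1) + a ^ q + 1) : c ∣ a ^ 2 + a + 1 := by
  convert dvd_sub (dvd_mul_of_dvd_right hF (a + 1)) (dvd_mul_of_dvd_right hG a) using 1
  ring

theorem sq_add_add_one_dvd_pow_sub_one (a : R) {n : ℕ} (hn : 3 ∣ n) :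
    a ^ 2 + a + 1 ∣ a ^ n - 1 := by
  obtain ⟨k, rfl⟩ := hn
  rw [pow_mul]
  exact (Dvd.intro (a - 1) (by ring)).trans (sub_one_dvd_pow_sub_one (a ^ 3) k)

theorem sq_add_add_one_dvd_trinomial (hq : q % 3 = 1) (a : R) :
    a ^ 2 + a + 1 ∣ a ^ (q + 1) + a + 1 := by
  obtain ⟨k, rfl⟩ : ∃ k, q = 3 * k + 1 := ⟨q / 3, by omega⟩
  convert dvd_add (dvd_refl _)
    ((sq_add_add_one_dvd_pow_sub_one a (dvd_mul_right 3 k)).mul_left (a ^ 2)) using 1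
  ring

theorem sq_add_add_one_dvd_reciprocal_trinomial (hq : q % 3 = 1) (a : R) :
    a ^ 2 + a + 1 ∣ a ^ (q + 1) + a ^ q + 1 := by
  obtain ⟨k, rfl⟩ : ∃ k, q = 3 * k + 1 := ⟨q / 3, by omega⟩
  convert dvd_add (dvd_refl _)
    ((sq_add_add_one_dvd_pow_sub_one a (dvd_mul_right 3 k)).mul_left (a * (a + 1))) using 1
  ring

theorem isCoprime_sq_add_add_one_trinomial [CharP R 2] (hq : q % 3 = 2) (a : R) :
    IsCoprime (a ^ 2 + a + 1) (a ^ (q + 1) + a + 1) := by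
  obtain ⟨c, hc⟩ := sq_add_add_one_dvd_pow_sub_one a (n := q + 1) (by omega)
  have h2 : (2 : R) = 0 := CharTwo.two_eq_zero
  have hF : a ^ (q + 1) + a + 1 = a + (a ^ 2 + a + 1) * c := by
    rw [← hc]; linear_combination h2
  rw [hF]
  exact IsCoprime.add_mul_left_right ⟨1, -(a + 1), by ring⟩ c

end CommRing

theorem Nat.two_pow_mod_three_of_even {s : ℕ} (hs : Even s) : 2 ^ s % 3 = 1 := by
  obtain ⟨m, rfl⟩ := hs
  rw [← two_mul, pow_mul, Nat.pow_mod]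
  norm_num

theorem Nat.two_pow_mod_three_of_odd {s : ℕ} (hs : Odd s) : 2 ^ s % 3 = 2 := by
  obtain ⟨m, rfl⟩ := hs
  rw [pow_succ, pow_mul, Nat.mul_mod, Nat.pow_mod]
  norm_num

section Field

variable {k L : Type*} [Field k] [Field L] [IsAlgClosed L] [Algebra k L]

theorem Polynomial.Separable.dvd_of_forall_aeval_eq_zero {p r : k[X]} (hp : p.Separable)
    (hr : r ≠ 0) (h : ∀ a : L, aeval a p = 0 → aeval a r = 0) : p ∣ r := by
  rw [← map_dvd_map' (algebraMap k L)]
  refine (IsAlgClosed.splits _).dvd_of_roots_le_roots (map_ne_zero hp.ne_zero) ?_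
  rw [Multiset.le_iff_subset (nodup_roots hp.map)]
  intro a ha
  rw [mem_roots (map_ne_zero hp.ne_zero), IsRoot, eval_map_algebraMap] at ha
  rw [mem_roots (map_ne_zero hr), IsRoot, eval_map_algebraMap]
  exact h a ha

theorem Polynomial.aeval_gcd_eq_zero_iff [DecidableEq k] {A : Type*} [CommRing A] [Algebra k A]
    {f g : k[X]} {a : A} :
    aeval a (EuclideanDomain.gcd f g) = 0 ↔ aeval a f = 0 ∧ aeval a g = 0 := by
  refine ⟨fun h => ⟨aeval_eq_zero_of_dvd_aeval_eq_zero (EuclideanDomain.gcd_dvd_left f g) h,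
    aeval_eq_zero_of_dvd_aeval_eq_zero (EuclideanDomain.gcd_dvd_right f g) h⟩,
    fun ⟨hf, hg⟩ => ?_⟩
  rw [EuclideanDomain.gcd_eq_gcd_ab, map_add, map_mul, map_mul, hf, hg, zero_mul, zero_mul,
    add_zero]

theorem Polynomial.ncard_setOf_aeval_eq_zero_and_aeval_eq_zero [DecidableEq k] {f g : k[X]}
    (hf : f.Separable) :
    {a : L | aeval a f = 0 ∧ aeval a g = 0}.ncard = (EuclideanDomain.gcd f g).natDegree := by
  have hsep : (EuclideanDomain.gcd f g).Separable := hf.of_dvd (EuclideanDomain.gcd_dvd_left f g)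
  have hroots :
      {a : L | aeval a f = 0 ∧ aeval a g = 0} = (EuclideanDomain.gcd f g).rootSet L := by
    ext a
    rw [mem_rootSet_of_ne hsep.ne_zero, aeval_gcd_eq_zero_iff]
    rfl
  rw [hroots, Set.ncard_eq_toFinset_card', Set.toFinset_card,
    card_rootSet_eq_natDegree hsep (IsAlgClosed.splits _)]

theorem Polynomial.natDegree_gcd_add_natDegree_lcm [DecidableEq k] {f g : k[X]} (hf : f ≠ 0)
    (hg : g ≠ 0) :
    (EuclideanDomain.gcd f g).natDegree + (EuclideanDomain.lcm f g).natDegree =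
      f.natDegree + g.natDegree := by
  rw [← natDegree_mul, EuclideanDomain.gcd_mul_lcm, natDegree_mul hf hg]
  · exact fun h => hf (EuclideanDomain.gcd_eq_zero_iff.mp h).1
  · exact fun h => (EuclideanDomain.lcm_eq_zero_iff.mp h).elim hf hg

end Field

noncomputable instance : Unique (ZMod 2)[X]ˣ where
  default := 1
  uniq u := by
    obtain ⟨c, hc, hcu⟩ := Polynomial.isUnit_iff.mp u.isUnit
    have hc1 : c = 1 := by simpa using congrArg Units.val (Subsingleton.elim hc.unit 1)
    ext1
    rw [← hcu, hc1, map_one, Units.val_one]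

section Degree

variable {R : Type*} [Semiring R] [Nontrivial R] {q : ℕ}

theorem natDegree_trinomial (hq : q ≠ 0) : (X ^ (q + 1) + X + 1 : R[X]).natDegree = q + 1 := by
  compute_degree!
  simp [hq]

theorem natDegree_reciprocal_trinomial : (X ^ (q + 1) + X ^ q + 1 : R[X]).natDegree = q + 1 := by
  compute_degree!

theorem natDegree_sq_add_add_one : (X ^ 2 + X + 1 : R[X]).natDegree = 2 := by
  compute_degree!

theorem trinomial_ne_zero (hq : q ≠ 0) : (X ^ (q + 1) + X + 1 : R[X]) ≠ 0 := fun h => by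
  simpa [h] using natDegree_trinomial (R := R) hq

theorem reciprocal_trinomial_ne_zero : (X ^ (q + 1) + X ^ q + 1 : R[X]) ≠ 0 := fun h => by
  simpa [h] using natDegree_reciprocal_trinomial (R := R) (q := q)

theorem sq_add_add_one_ne_zero : (X ^ 2 + X + 1 : R[X]) ≠ 0 := fun h => by
  simpa [h] using natDegree_sq_add_add_one (R := R)

end Degree

section ZModTwo

variable {s q : ℕ}

theorem separable_X_pow_sq_add_self_add_one_sub_one (q : ℕ) :
    (X ^ (q ^ 2 + q + 1) - 1 : (ZMod 2)[X]).Separable := by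
  refine X_pow_sub_one_separable_iff.mpr (ZMod.natCast_ne_zero_iff_odd.mpr ?_)
  rw [show q ^ 2 + q + 1 = q * (q + 1) + 1 by ring]
  exact (Nat.even_mul_succ_self q).add_one

theorem gcd_trinomials_of_odd (hq : q = 2 ^ s) (hs : Odd s) :
    EuclideanDomain.gcd (X ^ (q + 1) + X + 1 : (ZMod 2)[X]) (X ^ (q + 1) + X ^ q + 1) = 1 := by
  have hq3 : q % 3 = 2 := hq ▸ Nat.two_pow_mod_three_of_odd hs
  refine isUnit_iff_eq_one.mp ((isCoprime_sq_add_add_one_trinomial hq3 X).isUnit_of_dvd' ?_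
    (EuclideanDomain.gcd_dvd_left _ _))
  exact dvd_sq_add_add_one_of_dvd_trinomials (EuclideanDomain.gcd_dvd_left _ _)
    (EuclideanDomain.gcd_dvd_right _ _)

theorem gcd_trinomials_of_even (hq : q = 2 ^ s) (hs : Even s) :
    EuclideanDomain.gcd (X ^ (q + 1) + X + 1 : (ZMod 2)[X]) (X ^ (q + 1) + X ^ q + 1) =
      X ^ 2 + X + 1 := by
  have hq3 : q % 3 = 1 := hq ▸ Nat.two_pow_mod_three_of_even hs
  refine associated_iff_eq.mp (associated_of_dvd_dvd ?_ ?_)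
  · exact dvd_sq_add_add_one_of_dvd_trinomials (EuclideanDomain.gcd_dvd_left _ _)
      (EuclideanDomain.gcd_dvd_right _ _)
  · exact EuclideanDomain.dvd_gcd (sq_add_add_one_dvd_trinomial hq3 X)
      (sq_add_add_one_dvd_reciprocal_trinomial hq3 X)

theorem gcd_pow_sub_one_add_one_pow_sub_one_eq_lcm (hq : q = 2 ^ s) :
    EuclideanDomain.gcd (X ^ (q ^ 2 + q + 1) - 1 : (ZMod 2)[X]) ((X + 1) ^ (q ^ 2 + q + 1) - 1) =
      EuclideanDomain.lcm (X ^ (q + 1) + X + 1) (X ^ (q + 1) + X ^ q + 1) := by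
  refine associated_iff_eq.mp (associated_of_dvd_dvd ?_ ?_)
  · refine ((separable_X_pow_sq_add_self_add_one_sub_one q).of_dvd
      (EuclideanDomain.gcd_dvd_left _ _)).dvd_of_forall_aeval_eq_zero
      (L := AlgebraicClosure (ZMod 2)) ?_ fun a ha => ?_
    · exact fun h => (EuclideanDomain.lcm_eq_zero_iff.mp h).elim
        (trinomial_ne_zero (hq ▸ (Nat.two_pow_pos s).ne')) reciprocal_trinomial_ne_zero
    · simp only [aeval_gcd_eq_zero_iff, map_sub, map_pow, map_add, aeval_X, map_one,
        sub_eq_zero] at ha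
      rcases trinomial_eq_zero_or_of_pow_eq_one hq ha.1 ha.2 with h | h
      · exact aeval_eq_zero_of_dvd_aeval_eq_zero (EuclideanDomain.dvd_lcm_left _ _)
          (by simpa using h)
      · exact aeval_eq_zero_of_dvd_aeval_eq_zero (EuclideanDomain.dvd_lcm_right _ _)
          (by simpa using h)
  · exact EuclideanDomain.lcm_dvd
      (EuclideanDomain.dvd_gcd (trinomial_dvd_pow_sub_one hq X)
        (trinomial_dvd_add_one_pow_sub_one hq X))
      (EuclideanDomain.dvd_gcd (reciprocal_trinomial_dvd_pow_sub_one hq X)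
        (reciprocal_trinomial_dvd_add_one_pow_sub_one hq X))

end ZModTwo

theorem stmt_17_general (s : ℕ) (q : ℕ) (hq : q = 2 ^ s) :
    (Odd s →
      EuclideanDomain.gcd (X ^ (q ^ 2 + q + 1) - 1)
          ((X + 1) ^ (q ^ 2 + q + 1) - 1 : Polynomial (ZMod 2)) =
        (X ^ (q + 1) + X + 1) * (X ^ (q + 1) + X ^ q + 1)) ∧
    (Even s →
      EuclideanDomain.gcd (X ^ (q ^ 2 + q + 1) - 1)
          ((X + 1) ^ (q ^ 2 + q + 1) - 1 : Polynomial (ZMod 2)) =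
        (X ^ (q + 1) + X + 1) * (X ^ (q + 1) + X ^ q + 1) / (X ^ 2 + X + 1)) ∧
    (Set.ncard {α : AlgebraicClosure (ZMod 2) |
        α ^ (q ^ 2 + q + 1) = 1 ∧ (α + 1) ^ (q ^ 2 + q + 1) = 1} : ℤ) =
      2 * q + 1 - (-1) ^ s := by
  have hq0 : q ≠ 0 := hq ▸ (Nat.two_pow_pos s).ne'
  have hdeg := natDegree_gcd_add_natDegree_lcm (trinomial_ne_zero (R := ZMod 2) hq0)
    (reciprocal_trinomial_ne_zero (q := q))
  rw [natDegree_trinomial hq0, natDegree_reciprocal_trinomial] at hdeg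
  have hmul :=
    EuclideanDomain.gcd_mul_lcm (X ^ (q + 1) + X + 1 : (ZMod 2)[X]) (X ^ (q + 1) + X ^ q + 1)
  rw [gcd_pow_sub_one_add_one_pow_sub_one_eq_lcm hq]
  refine ⟨fun hs => ?_, fun hs => ?_, ?_⟩
  · rwa [gcd_trinomials_of_odd hq hs, one_mul] at hmul
  · exact EuclideanDomain.eq_div_of_mul_eq_right sq_add_add_one_ne_zero
      (gcd_trinomials_of_even hq hs ▸ hmul)
  · have hcard := ncard_setOf_aeval_eq_zero_and_aeval_eq_zero (L := AlgebraicClosure (ZMod 2))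
      (g := (X + 1) ^ (q ^ 2 + q + 1) - 1) (separable_X_pow_sq_add_self_add_one_sub_one q)
    simp only [map_sub, map_pow, map_add, aeval_X, map_one, sub_eq_zero] at hcard
    rw [hcard, gcd_pow_sub_one_add_one_pow_sub_one_eq_lcm hq]
    rcases Nat.even_or_odd s with hs | hs
    · rw [gcd_trinomials_of_even hq hs, natDegree_sq_add_add_one] at hdeg
      rw [hs.neg_one_pow]
      omega
    · rw [gcd_trinomials_of_odd hq hs, natDegree_one] at hdeg
      rw [hs.neg_one_pow]
      omega

theorem stmt_17 (s : ℕ) (hs : 1 ≤ s) (q : ℕ) (hq : q = 2 ^ s) :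
    (Odd s →
      EuclideanDomain.gcd (X ^ (q ^ 2 + q + 1) - 1)
          ((X + 1) ^ (q ^ 2 + q + 1) - 1 : Polynomial (ZMod 2)) =
        (X ^ (q + 1) + X + 1) * (X ^ (q + 1) + X ^ q + 1)) ∧
    (Even s →
      EuclideanDomain.gcd (X ^ (q ^ 2 + q + 1) - 1)
          ((X + 1) ^ (q ^ 2 + q + 1) - 1 : Polynomial (ZMod 2)) =
        (X ^ (q + 1) + X + 1) * (X ^ (q + 1) + X ^ q + 1) / (X ^ 2 + X + 1)) ∧
    (Set.ncard {α : AlgebraicClosure (ZMod 2) |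
        α ^ (q ^ 2 + q + 1) = 1 ∧ (α + 1) ^ (q ^ 2 + q + 1) = 1} : ℤ) =
      2 * q + 1 - (-1) ^ s :=
  stmt_17_general s q hq
end

section
/- Let q = 2^s. The polynomials y^{q+1} - 1 and y^{q^2/2} + y^{q^2/4} + … + y^2 + y + 1 in 𝔽_2[y] have a nonconstant common factor over 𝔽_2; equivalently, there exists β ∈ 𝔽_{q^2} with β^{q+1} = 1 whose absolute trace to 𝔽_2 equals 1. Consequently there exists α in the algebraic closure of 𝔽_2 with α^{q^3+q^2+q+1} = 1 and (α+1)^{q^3+q^2+q+1} = 1. -/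
/-!
Let `ζ` be a primitive `(q+1)`-th root of unity and `T x = ∑_{j<2s} x^(2^j)`. Among `j < 2s`,
only `j = 0` has `q + 2^j ≡ 0 (mod q+1)`, so the character sum `∑ᵢ ζ^(iq) T(ζ^i)` equals `1`
and some `β = ζ^i` has `T β ≠ 0`. Since `β^(q²) = β`, `T β` is idempotent, hence `T β = 1`;
the minimal polynomial of `β` is the common factor. If `α² + α = β` then telescoping gives
`α^(q²) = α + T β = α + 1`, so both `α` and `α + 1` have `(q²+1)`-th power `α(α+1) = β`, and
`q³ + q² + q + 1 = (q² + 1)(q + 1)`.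
-/

open Polynomial Finset

theorem Nat.eq_zero_of_two_pow_add_one_dvd_two_pow_add_two_pow {s j : ℕ} (hj : j < 2 * s)
    (h : 2 ^ s + 1 ∣ 2 ^ s + 2 ^ j) : j = 0 := by
  rcases le_or_gt j s with hjs | hsj
  · have hle : 2 ^ j ≤ 2 ^ s := Nat.pow_le_pow_right two_pos hjs
    have hlt : 2 ^ s + 2 ^ j < 2 * (2 ^ s + 1) := by omega
    have heq := Nat.eq_of_dvd_of_lt_two_mul (by positivity) h hlt
    simpa using (by omega : 2 ^ j = 1)
  · obtain ⟨r, rfl⟩ := Nat.exists_eq_add_of_lt hsj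
    have hcop : Nat.Coprime (2 ^ s + 1) (2 ^ s) := by simp
    have hdvd : 2 ^ s + 1 ∣ 2 ^ (r + 1) + 1 := by
      refine hcop.dvd_of_dvd_mul_left ?_
      convert h using 1
      ring
    have hlt : 2 ^ (r + 1) < 2 ^ s := Nat.pow_lt_pow_right one_lt_two (by omega)
    have := Nat.le_of_dvd (by positivity) hdvd
    omega

/-- On `𝔽_{2^m}` this is the absolute trace to `𝔽₂`. -/
def absTrace {R : Type*} [CommSemiring R] (m : ℕ) (x : R) : R :=
  ∑ j ∈ range m, x ^ 2 ^ j

theorem absTrace_succ {R : Type*} [CommSemiring R] (m : ℕ) (x : R) :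
    absTrace (m + 1) x = absTrace m x + x ^ 2 ^ m :=
  sum_range_succ _ _

section CharTwo

variable {R : Type*} [CommRing R] [CharP R 2]

theorem absTrace_succ' (m : ℕ) (x : R) : absTrace (m + 1) x = x + absTrace m x ^ 2 := by
  simp_rw [absTrace, sum_range_succ', CharTwo.sum_sq, ← pow_mul, ← pow_succ, pow_zero, pow_one,
    add_comm]

theorem isIdempotentElem_absTrace {m : ℕ} {x : R} (hx : x ^ 2 ^ m = x) :
    IsIdempotentElem (absTrace m x) := by
  have h := (absTrace_succ m x).symm.trans (absTrace_succ' m x)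
  rw [hx, add_comm x] at h
  exact (sq (absTrace m x)).symm.trans (add_right_cancel h).symm

theorem pow_two_pow_eq_add_absTrace {α β : R} (h : α ^ 2 + α = β) (m : ℕ) :
    α ^ 2 ^ m = α + absTrace m β := by
  induction m with
  | zero => simp [absTrace]
  | succ m ih =>
    rw [pow_succ, pow_mul, ih, CharTwo.add_sq, absTrace_succ']
    linear_combination h - α * CharTwo.two_eq_zero (R := R)

theorem pow_two_pow_add_one_eq {α β : R} {m : ℕ} (h : α ^ 2 + α = β) (hβ : absTrace m β = 1) :
    α ^ (2 ^ m + 1) = β := by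
  rw [pow_succ, pow_two_pow_eq_add_absTrace h, hβ, ← h]
  ring

end CharTwo

theorem pow_sq_eq_self_of_pow_succ_eq_one {M : Type*} [Monoid M] {x : M} {q : ℕ}
    (h : x ^ (q + 1) = 1) : x ^ q ^ 2 = x :=
  calc x ^ q ^ 2 = x ^ q ^ 2 * x ^ (q + 1) := by rw [h, mul_one]
    _ = (x ^ (q + 1)) ^ q * x := by rw [← pow_add, ← pow_mul, ← pow_succ]; ring_nf
    _ = x := by rw [h, one_pow, one_mul]

section Field

variable {K : Type*} [Field K] [CharP K 2] {s : ℕ} {ζ : K}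

theorem sum_pow_mul_absTrace_pow (hζ : IsPrimitiveRoot ζ (2 ^ s + 1)) (hs : 1 ≤ s) :
    ∑ i ∈ range (2 ^ s + 1), ζ ^ (i * 2 ^ s) * absTrace (2 * s) (ζ ^ i) = 1 := by
  have hgeom : ∀ j ∈ range (2 * s),
      ∑ i ∈ range (2 ^ s + 1), (ζ ^ (2 ^ s + 2 ^ j)) ^ i = if j = 0 then 1 else 0 := by
    intro j hj
    split_ifs with hj0
    · simp [hj0, hζ.pow_eq_one, CharTwo.natCast_eq_ite, Nat.even_add_one, Nat.even_pow]
      omega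
    · have hne : ζ ^ (2 ^ s + 2 ^ j) ≠ 1 := fun h1 =>
        hj0 (Nat.eq_zero_of_two_pow_add_one_dvd_two_pow_add_two_pow (mem_range.mp hj)
          (hζ.pow_eq_one_iff_dvd _ |>.mp h1))
      rw [geom_sum_eq hne, ← pow_mul, mul_comm, pow_mul, hζ.pow_eq_one, one_pow, sub_self,
        zero_div]
  calc ∑ i ∈ range (2 ^ s + 1), ζ ^ (i * 2 ^ s) * absTrace (2 * s) (ζ ^ i)
      = ∑ j ∈ range (2 * s), ∑ i ∈ range (2 ^ s + 1), (ζ ^ (2 ^ s + 2 ^ j)) ^ i := by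
        simp_rw [absTrace, mul_sum]
        rw [sum_comm]
        exact sum_congr rfl fun j _ => sum_congr rfl fun i _ => by ring
    _ = ∑ j ∈ range (2 * s), if j = 0 then 1 else 0 := sum_congr rfl hgeom
    _ = 1 := by simp; omega

theorem exists_pow_eq_one_absTrace_eq_one (hζ : IsPrimitiveRoot ζ (2 ^ s + 1)) (hs : 1 ≤ s) :
    ∃ β : K, β ^ (2 ^ s + 1) = 1 ∧ absTrace (2 * s) β = 1 := by
  obtain ⟨i, -, hi⟩ : ∃ i ∈ range (2 ^ s + 1), absTrace (2 * s) (ζ ^ i) ≠ 0 := by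
    have hsum := sum_pow_mul_absTrace_pow hζ hs
    contrapose! hsum
    rw [sum_eq_zero fun i hi => by rw [hsum i hi, mul_zero]]
    exact zero_ne_one
  have hβ : (ζ ^ i) ^ (2 ^ s + 1) = 1 := by
    rw [← pow_mul, mul_comm, pow_mul, hζ.pow_eq_one, one_pow]
  have hfix : (ζ ^ i) ^ 2 ^ (2 * s) = ζ ^ i := by
    rw [mul_comm, pow_mul]
    exact pow_sq_eq_self_of_pow_succ_eq_one hβ
  exact ⟨ζ ^ i, hβ, (IsIdempotentElem.iff_eq_zero_or_one.mp
    (isIdempotentElem_absTrace hfix)).resolve_left hi⟩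

end Field

theorem IsAlgClosed.exists_sq_add_self_eq {K : Type*} [Field K] [IsAlgClosed K] (β : K) :
    ∃ α : K, α ^ 2 + α = β := by
  have hdeg : (X ^ 2 + X - C β).degree = 2 := by compute_degree!
  obtain ⟨α, hα⟩ := IsAlgClosed.exists_root (X ^ 2 + X - C β) (by rw [hdeg]; decide)
  exact ⟨α, by simpa [sub_eq_zero] using hα⟩

theorem stmt_18 (s : ℕ) (hs : 1 ≤ s) (q : ℕ) (hq : q = 2 ^ s) :
    (∃ h : Polynomial (ZMod 2), 0 < h.natDegree ∧
        h ∣ X ^ (q + 1) - 1 ∧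
        h ∣ 1 + ∑ j ∈ Finset.range (2 * s), X ^ 2 ^ j) ∧
    (∃ β : AlgebraicClosure (ZMod 2), β ^ (q + 1) = 1 ∧
        ∑ j ∈ Finset.range (2 * s), β ^ 2 ^ j = 1) ∧
    (∃ α : AlgebraicClosure (ZMod 2),
        α ^ (q ^ 3 + q ^ 2 + q + 1) = 1 ∧ (α + 1) ^ (q ^ 3 + q ^ 2 + q + 1) = 1) := by
  subst hq
  have : NeZero ((2 ^ s + 1 : ℕ) : ZMod 2) := NeZero.of_not_dvd (ZMod 2) (p := 2) <| by
    rw [Nat.dvd_add_right (dvd_pow_self 2 (by omega))]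
    decide
  obtain ⟨ζ, hζ⟩ :=
    HasEnoughRootsOfUnity.exists_primitiveRoot (AlgebraicClosure (ZMod 2)) (2 ^ s + 1)
  obtain ⟨β, hβ, htr⟩ := exists_pow_eq_one_absTrace_eq_one hζ hs
  obtain ⟨α, hα⟩ := IsAlgClosed.exists_sq_add_self_eq β
  have hα₁ : (α + 1) ^ 2 + (α + 1) = β := by
    linear_combination hα + (α + 1) * CharTwo.two_eq_zero (R := AlgebraicClosure (ZMod 2))
  have hpow : ∀ γ, γ ^ 2 + γ = β → γ ^ ((2 ^ s) ^ 3 + (2 ^ s) ^ 2 + 2 ^ s + 1) = 1 := by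
    intro γ hγ
    rw [show (2 ^ s) ^ 3 + (2 ^ s) ^ 2 + 2 ^ s + 1 = (2 ^ (2 * s) + 1) * (2 ^ s + 1) by ring,
      pow_mul, pow_two_pow_add_one_eq hγ htr, hβ]
  refine ⟨⟨minpoly (ZMod 2) β, minpoly.natDegree_pos (Algebra.IsIntegral.isIntegral β),
    minpoly.dvd _ _ ?_, minpoly.dvd _ _ ?_⟩, ⟨β, hβ, htr⟩, α, hpow α hα, hpow (α + 1) hα₁⟩
  · simp [hβ]
  · simp only [map_add, map_one, map_sum, map_pow, aeval_X]
    rw [← absTrace, htr, CharTwo.add_self_eq_zero]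
end
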